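/- arXiv:2601.13324 — 4 statements merged into one kernel-verified Lean document; each statement's English description precedes it below -/
import Mathlib

section
/- Let α^(1),…,α^(ℓ) be compositions of n_1,…,n_ℓ (all positive), let N = n_1+⋯+n_ℓ, let p_j := n_1+⋯+n_j for 1 ≤ j ≤ ℓ−1, let P := {p_1,…,p_{ℓ−1}}, and let D := ⋃_{j=1}^ℓ {n_1+⋯+n_{j−1} + d : d ∈ Des(α^(j))} ⊆ {1,…,N−1} \ P. Then the number of permutations w of {1,…,N} with Des(w) \ P = D equals the multinomial coefficient N!/(n_1!⋯n_ℓ!) times the product f^{α^(1)} f^{α^(2)} ⋯ f^{α^(ℓ)}. (This is the dimension of the generalized ribbon projective module P_{(α^(1),…,α^(ℓ))} induced from the parabolic subalgebra.) -/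
/-- The descent set of a composition `α = (α₁,…,α_ℓ)`: the partial sums
`α₁+⋯+α_i` for `1 ≤ i < ℓ`. -/
def Des (α : List ℕ) : Finset ℕ :=
  ((List.range (α.length - 1)).map (fun i => (α.take (i + 1)).sum)).toFinset

/-- The descent set of a permutation `w` of `{1,…,N}` (realized as `Equiv.Perm (Fin N)` in
0-based indexing): the set of `i ∈ {1,…,N−1}` with `w(i) > w(i+1)` in one-line notation. -/
def permDes {N : ℕ} (w : Equiv.Perm (Fin N)) : Finset ℕ :=
  Finset.image (fun i : Fin (N - 1) => (i : ℕ) + 1)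
    (Finset.univ.filter
      (fun i : Fin (N - 1) => w ⟨(i : ℕ) + 1, by omega⟩ < w ⟨(i : ℕ), by omega⟩))

/-- `fNum N E` is the number of permutations of `{1,…,N}` with descent set `E`;
for a composition `γ ⊨ N`, `fNum N (Des γ)` is `f^γ`. -/
def fNum (N : ℕ) (E : Finset ℕ) : ℕ :=
  (Finset.univ.filter (fun w : Equiv.Perm (Fin N) => permDes w = E)).card

/-- For a sequence of compositions `A = (α⁽¹⁾,…,α⁽ℓ⁾)` of sizes `n₁,…,n_ℓ`, the partial sum
`p_j = n₁+⋯+n_j` (here `j` ranges over `1 ≤ j ≤ ℓ−1` in the statements below). -/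
def pval (A : List (List ℕ)) (j : ℕ) : ℕ := ((A.take j).flatten).sum

/-- `P := {p₁,…,p_{ℓ−1}}`. -/
def Pset (A : List (List ℕ)) : Finset ℕ :=
  Finset.image (pval A) (Finset.Icc 1 (A.length - 1))

/-- `D := ⋃_{j=1}^ℓ {n₁+⋯+n_{j−1} + d : d ∈ Des(α⁽ʲ⁾)}` (0-based `j` below). -/
def Dset (A : List (List ℕ)) : Finset ℕ :=
  (Finset.range A.length).biUnion
    (fun j => (Des (A.getD j [])).image (fun d => ((A.take j).flatten).sum + d))

/-!
A permutation `w` of `{1,…,m+n}` is the same thing as the set `A` of its first `m` values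
together with the standardizations `u`, `v` of its first `m` and its last `n` values. Away
from position `m`, the descents of `w` are those of `u` together with those of `v` shifted
by `m`. So once the descent at `m` is ignored, the permutations with a prescribed descent set
are counted by `C(m+n, m)` times the numbers of admissible `u` and `v`. Splitting off the last
composition and inducting on `ℓ` gives the multinomial coefficient times `f^{α⁽¹⁾} ⋯ f^{α⁽ℓ⁾}`.
-/

open Finset

lemma permDes_subset_range {N : ℕ} (w : Equiv.Perm (Fin N)) : permDes w ⊆ range N := by
  intro x hx
  simp only [permDes, mem_image, mem_filter] at hx
  obtain ⟨i, -, rfl⟩ := hx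
  simpa using Nat.add_lt_of_lt_sub i.isLt

lemma zero_notMem_permDes {N : ℕ} (w : Equiv.Perm (Fin N)) : 0 ∉ permDes w := by
  simp [permDes]

lemma mem_permDes {N : ℕ} (w : Equiv.Perm (Fin N)) (x : ℕ) (h0 : 0 < x) (hN : x < N) :
    x ∈ permDes w ↔ w ⟨x, hN⟩ < w ⟨x - 1, by omega⟩ := by
  simp only [permDes, mem_image, mem_filter, mem_univ, true_and]
  constructor
  · rintro ⟨i, hi, rfl⟩
    convert hi using 2; exact Fin.ext (by simp)
  · intro h
    refine ⟨⟨x - 1, by omega⟩, ?_, by simp; omega⟩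
    convert h using 2; exact Fin.ext (by simp; omega)

lemma add_mem_permDes_iff {N M k : ℕ} {w : Equiv.Perm (Fin N)} {u : Equiv.Perm (Fin M)}
    {f : Fin M → Fin N} (hf : ∀ i, (f i : ℕ) = k + i) (hwu : ∀ i j, w (f i) < w (f j) ↔ u i < u j)
    {x : ℕ} (hx : 0 < x) (hxM : x < M) :
    k + x ∈ permDes w ↔ x ∈ permDes u := by
  have hxN : k + x < N := hf ⟨x, hxM⟩ ▸ (f _).isLt
  have h₁ : f ⟨x, hxM⟩ = ⟨k + x, hxN⟩ := Fin.ext (hf _)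
  have h₂ : f ⟨x - 1, by omega⟩ = ⟨k + x - 1, by omega⟩ := Fin.ext (by rw [hf]; simp; omega)
  rw [mem_permDes w (k + x) (by omega) hxN, mem_permDes u x hx hxM, ← h₁, ← h₂, hwu]

section Shuffle

variable {m n : ℕ}

lemma card_compl_of_card_eq {A : Finset (Fin (m + n))} (hA : #A = m) : #Aᶜ = n := by
  rw [card_compl, hA]; simp

def shuffleEquiv (A : {A : Finset (Fin (m + n)) // #A = m}) : Fin m ⊕ Fin n ≃ Fin (m + n) :=
  (Equiv.sumCongr (A.1.orderIsoOfFin A.2).toEquiv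
    ((A.1ᶜ.orderIsoOfFin (card_compl_of_card_eq A.2)).toEquiv.trans
      (Equiv.subtypeEquivRight fun _ => mem_compl))).trans
    (Equiv.sumCompl (· ∈ A.1))

/-- The permutation taking the values `A` at the first `m` positions, in the relative order
of `u`, and the values `Aᶜ` at the last `n` positions, in the relative order of `v`. -/
def shuffle (A : {A : Finset (Fin (m + n)) // #A = m}) (u : Equiv.Perm (Fin m))
    (v : Equiv.Perm (Fin n)) : Equiv.Perm (Fin (m + n)) :=
  (finSumFinEquiv.symm.trans (Equiv.sumCongr u v)).trans (shuffleEquiv A)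

variable (A : {A : Finset (Fin (m + n)) // #A = m}) (u : Equiv.Perm (Fin m))
  (v : Equiv.Perm (Fin n))

lemma shuffle_castAdd (i : Fin m) :
    shuffle A u v (Fin.castAdd n i) = A.1.orderIsoOfFin A.2 (u i) := by
  simp [shuffle, shuffleEquiv]

lemma shuffle_natAdd (i : Fin n) :
    shuffle A u v (Fin.natAdd m i) = A.1ᶜ.orderIsoOfFin (card_compl_of_card_eq A.2) (v i) := by
  simp [shuffle, shuffleEquiv]

lemma shuffle_castAdd_lt_iff (i j : Fin m) :
    shuffle A u v (Fin.castAdd n i) < shuffle A u v (Fin.castAdd n j) ↔ u i < u j := by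
  rw [shuffle_castAdd, shuffle_castAdd, Subtype.coe_lt_coe, OrderIso.lt_iff_lt]

lemma shuffle_natAdd_lt_iff (i j : Fin n) :
    shuffle A u v (Fin.natAdd m i) < shuffle A u v (Fin.natAdd m j) ↔ v i < v j := by
  rw [shuffle_natAdd, shuffle_natAdd, Subtype.coe_lt_coe, OrderIso.lt_iff_lt]

lemma image_shuffle_castAdd : univ.image (fun i => shuffle A u v (Fin.castAdd n i)) = A.1 := by
  ext x
  simp only [mem_image, mem_univ, true_and, shuffle_castAdd]
  refine ⟨fun ⟨i, hi⟩ => hi ▸ Subtype.coe_prop _, fun hx => ?_⟩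
  exact ⟨u.symm ((A.1.orderIsoOfFin A.2).symm ⟨x, hx⟩), by simp⟩

lemma mem_permDes_shuffle_iff_of_lt {x : ℕ} (hxm : x < m) :
    x ∈ permDes (shuffle A u v) ↔ x ∈ permDes u := by
  rcases Nat.eq_zero_or_pos x with rfl | hx
  · simp only [zero_notMem_permDes]
  · simpa using add_mem_permDes_iff (k := 0) (f := Fin.castAdd n) (by simp)
      (shuffle_castAdd_lt_iff A u v) hx hxm

lemma add_mem_permDes_shuffle_iff {y : ℕ} (hy : 0 < y) :
    m + y ∈ permDes (shuffle A u v) ↔ y ∈ permDes v := by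
  rcases lt_or_ge y n with hyn | hyn
  · exact add_mem_permDes_iff (f := Fin.natAdd m) (by simp) (shuffle_natAdd_lt_iff A u v) hy hyn
  · refine iff_of_false (fun h => ?_) (fun h => ?_)
    · have := mem_range.1 (permDes_subset_range _ h); omega
    · have := mem_range.1 (permDes_subset_range _ h); omega

lemma permDes_shuffle :
    permDes (shuffle A u v) \ {m} = permDes u ∪ (permDes v).image (· + m) := by
  have hu_lt : ∀ x ∈ permDes u, x < m := fun x hx => mem_range.1 (permDes_subset_range u hx)
  have hv_pos : ∀ y ∈ permDes v, 0 < y :=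
    fun y hy => Nat.pos_of_ne_zero fun h => zero_notMem_permDes v (h ▸ hy)
  ext x
  simp only [mem_sdiff, mem_singleton, mem_union, mem_image]
  rcases lt_trichotomy x m with hxm | rfl | hxm
  · rw [mem_permDes_shuffle_iff_of_lt A u v hxm]
    exact ⟨fun h => Or.inl h.1, fun h => ⟨h.resolve_right (by omega), by omega⟩⟩
  · simp only [not_true_eq_false, and_false, false_iff, not_or, not_exists, not_and]
    exact ⟨fun h => (hu_lt _ h).false, fun y hy hym => (hv_pos y hy).ne' (by omega)⟩
  · obtain ⟨y, rfl⟩ : ∃ y, x = m + y := ⟨x - m, by omega⟩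
    rw [add_mem_permDes_shuffle_iff A u v (by omega)]
    constructor
    · rintro ⟨h, -⟩
      exact Or.inr ⟨y, h, add_comm _ _⟩
    · rintro (h | ⟨a, ha, hay⟩)
      · exact absurd (hu_lt _ h) (by omega)
      · obtain rfl : a = y := by omega
        exact ⟨ha, by omega⟩

lemma shuffle_injective :
    Function.Injective fun x : {A : Finset (Fin (m + n)) // #A = m} × Equiv.Perm (Fin m) ×
      Equiv.Perm (Fin n) => shuffle x.1 x.2.1 x.2.2 := by
  rintro ⟨A, u, v⟩ ⟨A', u', v'⟩ h
  simp only at h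
  obtain rfl : A = A' :=
    Subtype.ext (by rw [← image_shuffle_castAdd A u v, h, image_shuffle_castAdd])
  have hu : ∀ i, u i = u' i := fun i => (A.1.orderIsoOfFin A.2).injective <| Subtype.ext <| by
    rw [← shuffle_castAdd, ← shuffle_castAdd, h]
  have hv : ∀ i, v i = v' i := fun i => (A.1ᶜ.orderIsoOfFin _).injective <| Subtype.ext <| by
    rw [← shuffle_natAdd, ← shuffle_natAdd, h]
  rw [Equiv.ext hu, Equiv.ext hv]

/-- Both sides have `(m + n)!` elements, so injectivity suffices. -/
lemma shuffle_bijective :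
    Function.Bijective fun x : {A : Finset (Fin (m + n)) // #A = m} × Equiv.Perm (Fin m) ×
      Equiv.Perm (Fin n) => shuffle x.1 x.2.1 x.2.2 := by
  rw [Fintype.bijective_iff_injective_and_card]
  refine ⟨shuffle_injective, ?_⟩
  simp only [Fintype.card_prod, Fintype.card_finset_len, Fintype.card_perm, Fintype.card_fin]
  rw [← mul_assoc, Nat.choose_symm_add, Nat.add_choose_mul_factorial_mul_factorial]

end Shuffle

lemma union_image_add_eq_iff {m : ℕ} {X X' Y Y' : Finset ℕ} (hX : X ⊆ range m)
    (hX' : X' ⊆ range m) :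
    X ∪ Y.image (· + m) = X' ∪ Y'.image (· + m) ↔ X = X' ∧ Y = Y' := by
  refine ⟨fun h => ⟨?_, ?_⟩, fun ⟨hX, hY⟩ => hX ▸ hY ▸ rfl⟩
  · have hlow : ∀ {Z W : Finset ℕ}, Z ⊆ range m → (Z ∪ W.image (· + m)).filter (· < m) = Z := by
      intro Z W hZ
      rw [filter_union, filter_true_of_mem fun x hx => mem_range.1 (hZ hx),
        filter_false_of_mem (by simp), union_empty]
    rw [← hlow hX, h, hlow hX']
  · ext y
    have hy : y + m ∉ X := fun h => by have := mem_range.1 (hX h); omega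
    have hy' : y + m ∉ X' := fun h => by have := mem_range.1 (hX' h); omega
    simpa [hy, hy'] using congr(y + m ∈ $h)

lemma union_image_add_sdiff_eq_iff {m : ℕ} {X X' Y Y' P : Finset ℕ} (hX : X ⊆ range m)
    (hX' : X' ⊆ range m) (hP : P ⊆ range m) :
    (X ∪ Y.image (· + m)) \ P = X' ∪ Y'.image (· + m) ↔ X \ P = X' ∧ Y = Y' := by
  have hdisj : Disjoint (Y.image (· + m)) P := by
    rw [disjoint_left]
    rintro _ hx hxP
    obtain ⟨y, -, rfl⟩ := mem_image.1 hx
    have := mem_range.1 (hP hxP)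
    omega
  rw [union_sdiff_distrib, sdiff_eq_self_of_disjoint hdisj]
  exact union_image_add_eq_iff (sdiff_subset.trans hX) hX'

def desSdiffCount (N : ℕ) (P D : Finset ℕ) : ℕ :=
  #{w : Equiv.Perm (Fin N) | permDes w \ P = D}

lemma desSdiffCount_insert_zero (N : ℕ) (P D : Finset ℕ) :
    desSdiffCount N (insert 0 P) D = desSdiffCount N P D := by
  unfold desSdiffCount
  congr! 3 with w
  rw [sdiff_insert_of_notMem (zero_notMem_permDes w)]

lemma desSdiffCount_add {m n : ℕ} {P D₁ : Finset ℕ} (D₂ : Finset ℕ) (hP : P ⊆ range m)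
    (hD₁ : D₁ ⊆ range m) :
    desSdiffCount (m + n) (insert m P) (D₁ ∪ D₂.image (· + m))
      = (m + n).choose m * desSdiffCount m P D₁ * fNum n D₂ := by
  have key : ∀ (A : {A : Finset (Fin (m + n)) // #A = m}) (u : Equiv.Perm (Fin m))
      (v : Equiv.Perm (Fin n)), permDes (shuffle A u v) \ insert m P = D₁ ∪ D₂.image (· + m) ↔
      permDes u \ P = D₁ ∧ permDes v = D₂ := by
    intro A u v
    rw [insert_eq, ← sup_eq_union, ← sdiff_sdiff_left, permDes_shuffle,
      union_image_add_sdiff_eq_iff (permDes_subset_range u) hD₁ hP]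
  calc desSdiffCount (m + n) (insert m P) (D₁ ∪ D₂.image (· + m))
      = #((univ : Finset {A : Finset (Fin (m + n)) // #A = m}) ×ˢ
          (univ.filter (fun u : Equiv.Perm (Fin m) => permDes u \ P = D₁) ×ˢ
            univ.filter (fun v : Equiv.Perm (Fin n) => permDes v = D₂))) := by
        refine (card_equiv (Equiv.ofBijective _ shuffle_bijective) fun x => ?_).symm
        simp [key]
    _ = (m + n).choose m * desSdiffCount m P D₁ * fNum n D₂ := by
        simp [card_product, desSdiffCount, fNum, mul_assoc]

lemma sum_take_lt_sum_of_pos {l : List ℕ} (hl : ∀ a ∈ l, 0 < a) {k : ℕ} (hk : k < l.length) :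
    (l.take k).sum < l.sum := by
  have hdrop : 0 < (l.drop k).sum :=
    List.sum_pos _ (fun a ha => hl a (List.mem_of_mem_drop ha)) (by simpa using hk)
  conv_rhs => rw [← List.take_append_drop k l, List.sum_append]
  omega

lemma Des_subset_range {γ : List ℕ} (hγ : ∀ a ∈ γ, 0 < a) : Des γ ⊆ range γ.sum := by
  intro d hd
  simp only [Des, List.mem_toFinset, List.mem_map, List.mem_range] at hd
  obtain ⟨i, hi, rfl⟩ := hd
  exact mem_range.2 (sum_take_lt_sum_of_pos hγ (by omega))

lemma sum_flatten_take (B : List (List ℕ)) (j : ℕ) :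
    (B.take j).flatten.sum = ((B.map List.sum).take j).sum := by
  rw [List.sum_flatten, List.map_take]

section Compositions

variable {B : List (List ℕ)} (hB : ∀ α ∈ B, α ≠ [] ∧ ∀ a ∈ α, 0 < a)
include hB

lemma blockSums_pos : ∀ a ∈ B.map List.sum, 0 < a := by
  simp only [List.mem_map]
  rintro _ ⟨α, hα, rfl⟩
  exact List.sum_pos _ (hB α hα).2 (hB α hα).1

lemma Pset_subset_range : Pset B ⊆ range B.flatten.sum := by
  intro x hx
  simp only [Pset, pval, mem_image, mem_Icc] at hx
  obtain ⟨j, ⟨hj₁, hj₂⟩, rfl⟩ := hx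
  rw [mem_range, sum_flatten_take, List.sum_flatten]
  exact sum_take_lt_sum_of_pos (blockSums_pos hB) (by simp; omega)

lemma Dset_subset_range : Dset B ⊆ range B.flatten.sum := by
  intro x hx
  simp only [Dset, mem_biUnion, mem_range, mem_image] at hx
  obtain ⟨j, hj, d, hd, rfl⟩ := hx
  rw [List.getD_eq_getElem _ _ hj] at hd
  have hdj := mem_range.1 (Des_subset_range (hB _ (List.getElem_mem hj)).2 hd)
  have hjm : j < (B.map List.sum).length := by simpa using hj
  rw [mem_range, sum_flatten_take, List.sum_flatten]
  calc ((B.map List.sum).take j).sum + d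
        < ((B.map List.sum).take j).sum + (B.map List.sum)[j] := by simpa using hdj
    _ = ((B.map List.sum).take (j + 1)).sum := (List.sum_take_succ _ _ hjm).symm
    _ ≤ (B.map List.sum).sum := (List.take_sublist _ _).sum_le_sum fun _ _ => Nat.zero_le _

end Compositions

lemma Pset_append {B : List (List ℕ)} (hB : B ≠ []) (α : List ℕ) :
    Pset (B ++ [α]) = insert B.flatten.sum (Pset B) := by
  have hlen : 0 < B.length := List.length_pos_iff.mpr hB
  have hpval : ∀ j ≤ B.length, pval (B ++ [α]) j = pval B j := fun j hj => by
    simp only [pval, List.take_append_of_le_length hj]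
  have hIcc : Icc 1 B.length = insert B.length (Icc 1 (B.length - 1)) := by
    ext j; simp only [mem_Icc, mem_insert]; omega
  rw [Pset, List.length_append, List.length_singleton, Nat.add_sub_cancel, hIcc, image_insert,
    hpval _ le_rfl, Pset, image_congr fun j hj => hpval j (by simp at hj; omega)]
  simp [pval]

lemma Dset_append (B : List (List ℕ)) (α : List ℕ) :
    Dset (B ++ [α]) = Dset B ∪ (Des α).image (· + B.flatten.sum) := by
  rw [Dset, List.length_append, List.length_singleton, range_add_one, biUnion_insert,
    union_comm, Dset]
  congr 1
  · refine biUnion_congr rfl fun j hj => ?_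
    rw [mem_range] at hj
    rw [List.getD_append _ _ _ _ hj, List.take_append_of_le_length hj.le]
  · simp [add_comm]

lemma desSdiffCount_Pset_append (N : ℕ) (B : List (List ℕ)) (α : List ℕ) (D : Finset ℕ) :
    desSdiffCount N (Pset (B ++ [α])) D = desSdiffCount N (insert B.flatten.sum (Pset B)) D := by
  rcases eq_or_ne B [] with rfl | hB
  · simpa [Pset] using (desSdiffCount_insert_zero N ∅ D).symm
  · rw [Pset_append hB]

lemma sum_range_length_getD_sum (B : List (List ℕ)) :
    ∑ j ∈ range B.length, (B.getD j []).sum = B.flatten.sum := by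
  induction B with
  | nil => simp
  | cons β B ih =>
    rw [List.length_cons, sum_range_succ']
    simp only [List.getD_cons_succ, List.getD_cons_zero, ih, List.flatten_cons, List.sum_append,
      add_comm]

lemma multinomial_append (B : List (List ℕ)) (α : List ℕ) :
    Nat.multinomial (range (B ++ [α]).length) (fun j => ((B ++ [α]).getD j []).sum)
      = (B.flatten.sum + α.sum).choose B.flatten.sum
        * Nat.multinomial (range B.length) (fun j => (B.getD j []).sum) := by
  have hB : ∀ j ∈ range B.length, ((B ++ [α]).getD j []).sum = (B.getD j []).sum :=
    fun j hj => by rw [List.getD_append _ _ _ _ (mem_range.1 hj)]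
  rw [List.length_append, List.length_singleton, range_add_one,
    Nat.multinomial_insert notMem_range_self, sum_congr rfl hB, Nat.multinomial_congr hB,
    sum_range_length_getD_sum, Nat.choose_symm_add]
  simp [add_comm]

theorem dimension_of_generalized_ribbon_projective_general (A : List (List ℕ))
    (hcomp : ∀ α ∈ A, α ≠ [] ∧ ∀ a ∈ α, 0 < a) :
    (Finset.univ.filter (fun w : Equiv.Perm (Fin A.flatten.sum) =>
        permDes w \ Pset A = Dset A)).card
      = Nat.multinomial (Finset.range A.length) (fun j => (A.getD j []).sum)
          * (A.map (fun α => fNum α.sum (Des α))).prod := by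
  change desSdiffCount _ (Pset A) (Dset A) = _
  induction A using List.reverseRecOn with
  | nil => rfl
  | append_singleton B α ih =>
    have hB : ∀ β ∈ B, β ≠ [] ∧ ∀ a ∈ β, 0 < a := fun β hβ => hcomp β (List.mem_append_left _ hβ)
    rw [List.flatten_append, List.sum_append, List.flatten_singleton, desSdiffCount_Pset_append,
      Dset_append, desSdiffCount_add _ (Pset_subset_range hB) (Dset_subset_range hB), ih hB,
      multinomial_append, List.map_append, List.prod_append]
    simp [mul_assoc]

/-- the number of permutations `w` of `{1,…,N}` with `Des(w) \ P = D` equals the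
multinomial coefficient `N!/(n₁!⋯n_ℓ!)` times `f^{α⁽¹⁾} ⋯ f^{α⁽ℓ⁾}`. -/
theorem dimension_of_generalized_ribbon_projective (A : List (List ℕ)) (hA : A ≠ [])
    (hcomp : ∀ α ∈ A, α ≠ [] ∧ ∀ a ∈ α, 0 < a) :
    (Finset.univ.filter (fun w : Equiv.Perm (Fin A.flatten.sum) =>
        permDes w \ Pset A = Dset A)).card
      = Nat.multinomial (Finset.range A.length) (fun j => (A.getD j []).sum)
          * (A.map (fun α => fNum α.sum (Des α))).prod :=
  dimension_of_generalized_ribbon_projective_general A hcomp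
end

section
/- For every composition α of n, the permutation w_1(α) satisfies w_1(α)^{−1} = w_1(rev(α)), where rev(α) is the reversed composition. -/
/-- The one-line word of `w₁(α)` for a composition `α = (α₁,…,α_ℓ)`: the concatenation, for
`i = 1,…,ℓ`, of the increasing runs `(Sᵢ+1, …, Sᵢ+αᵢ)` where `Sᵢ := α_{i+1}+⋯+α_ℓ`. -/
def w1List : List ℕ → List ℕ
  | [] => []
  | a :: rest => (List.range a).map (fun t => rest.sum + t + 1) ++ w1List rest

/-- The one-line notation of a permutation of `{1,…,N}` (values written 1-based). -/
def oneLine {N : ℕ} (w : Equiv.Perm (Fin N)) : List ℕ :=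
  List.ofFn (fun i => (w i : ℕ) + 1)

/-- The 0-based value function underlying `w1List`. -/
def fw : List ℕ → ℕ → ℕ
  | [], j => j
  | a :: rest, j => if j < a then rest.sum + j else fw rest (j - a)

lemma w1List_cons (a : ℕ) (rest : List ℕ) :
    w1List (a :: rest) = (List.range a).map (fun t => rest.sum + t + 1) ++ w1List rest := rfl

lemma fw_cons (a : ℕ) (rest : List ℕ) (j : ℕ) :
    fw (a :: rest) j = if j < a then rest.sum + j else fw rest (j - a) := rfl

lemma w1List_length (α : List ℕ) : (w1List α).length = α.sum := by
  induction α with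
  | nil => rfl
  | cons a rest ih => simp [w1List, ih]

lemma w1List_getElem (α : List ℕ) (j : ℕ) (h : j < (w1List α).length) :
    (w1List α)[j] = fw α j + 1 := by
  induction α generalizing j with
  | nil => simp [w1List_length] at h
  | cons a rest ih =>
    rw [List.getElem_of_eq (w1List_cons a rest) h]
    rw [w1List_cons] at h
    rcases lt_or_ge j a with h1 | h1
    · rw [List.getElem_append_left (by simpa using h1)]
      simp [fw, h1]
    · rw [List.getElem_append_right (by simpa using h1)]
      simp only [List.length_map, List.length_range]
      rw [ih]
      simp [fw, h1, Nat.not_lt_of_ge h1]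

lemma fw_append (L M : List ℕ) (j : ℕ) :
    fw (L ++ M) j = if j < L.sum then M.sum + fw L j else fw M (j - L.sum) := by
  induction L generalizing j with
  | nil => simp [fw]
  | cons a L ih =>
    rw [List.cons_append, fw_cons, fw_cons, List.sum_cons]
    by_cases h1 : j < a
    · rw [if_pos h1, if_pos (by omega), if_pos h1, List.sum_append]
      omega
    · rw [if_neg h1, if_neg h1, ih]
      by_cases h2 : j - a < L.sum
      · rw [if_pos h2, if_pos (by omega)]
      · rw [if_neg h2, if_neg (by omega)]
        congr 1
        omega

lemma fw_lt_and_inv (α : List ℕ) (j : ℕ) (h : j < α.sum) :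
    fw α j < α.sum ∧ fw α.reverse (fw α j) = j := by
  induction α generalizing j with
  | nil => simp at h
  | cons a rest ih =>
    simp only [List.sum_cons] at h
    simp only [fw, List.reverse_cons, List.sum_cons]
    by_cases h1 : j < a
    · rw [if_pos h1]
      refine ⟨by omega, ?_⟩
      rw [fw_append, if_neg (by rw [List.sum_reverse]; omega), List.sum_reverse,
        Nat.add_sub_cancel_left]
      simp [fw, h1]
    · rw [if_neg h1]
      obtain ⟨hlt, hinv⟩ := ih (j - a) (by omega)
      refine ⟨by omega, ?_⟩
      rw [fw_append, if_pos (by rw [List.sum_reverse]; exact hlt), hinv]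
      simp only [List.sum_cons, List.sum_nil]
      omega

/-- for every composition `α ⊨ n`, the permutation `w₁(α)` satisfies
`w₁(α)⁻¹ = w₁(rev(α))`. -/
theorem w1_inverse_eq_w1_reverse (n : ℕ) (α : List ℕ)
    (hαs : α.sum = n) (hαp : ∀ a ∈ α, 0 < a)
    (w : Equiv.Perm (Fin n)) (hw : oneLine w = w1List α) :
    oneLine w⁻¹ = w1List α.reverse := by
  have hlen : (w1List α).length = n := by rw [w1List_length, hαs]
  -- w i = fw α i
  have hwval : ∀ i : Fin n, (w i : ℕ) = fw α i := by
    intro i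
    have h3 := List.getElem_of_eq hw (show (i:ℕ) < (oneLine w).length by simp [oneLine])
    rw [w1List_getElem] at h3
    simp only [oneLine, List.getElem_ofFn, Fin.eta] at h3
    omega
  apply List.ext_getElem
  · simp [oneLine, w1List_length, List.sum_reverse, hαs]
  · intro i h1 h2
    have hin : i < n := by simpa [oneLine] using h1
    have hrs : α.reverse.sum = n := by rw [List.sum_reverse, hαs]
    have hfr : fw α.reverse i < n := by
      have := (fw_lt_and_inv α.reverse i (by omega)).1
      omega
    have hinv : fw α (fw α.reverse i) = i := by
      have := (fw_lt_and_inv α.reverse i (by omega)).2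
      rwa [List.reverse_reverse] at this
    have hw2 : w ⟨fw α.reverse i, hfr⟩ = ⟨i, hin⟩ := by
      ext
      rw [hwval ⟨fw α.reverse i, hfr⟩]
      exact hinv
    have hw3 : w⁻¹ ⟨i, hin⟩ = ⟨fw α.reverse i, hfr⟩ := by
      rw [← hw2]; simp
    have hR : (w1List α.reverse)[i]'h2 = fw α.reverse i + 1 :=
      w1List_getElem α.reverse i h2
    rw [hR]
    simp only [oneLine, List.getElem_ofFn]
    rw [show (⟨i, by simpa [oneLine] using h1⟩ : Fin n) = ⟨i, hin⟩ from rfl, hw3]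
end

section
/- Let n ≥ 2 and let α = (α_1,…,α_ℓ) be a composition of n. Then in NSym: D(R_α) = Σ_{i : α_i > 1} R_{α−ε_i} + Σ_{j : (α^⊤)_j > 1} R_{(α^⊤−ε_j)^⊤}, where the first sum is over indices i with α_i > 1 and the second over indices j with the j-th part of α^⊤ greater than 1. -/
open scoped BigOperators

/-- `NSym`: the free associative ℚ-algebra on generators `H₁, H₂, …` indexed by the positive
integers, realized as the monoid algebra of the free monoid on `ℕ+` (so the words in
positive integers form a ℚ-basis, the monomial basis `{H_α}`). -/
abbrev NSym : Type := MonoidAlgebra ℚ (FreeMonoid ℕ+)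

/-- The complete homogeneous generator `H n` (with the convention `H 0 = 1`). -/
noncomputable def Hgen (n : ℕ) : NSym :=
  if h : 0 < n then MonoidAlgebra.of ℚ (FreeMonoid ℕ+) (FreeMonoid.of ⟨n, h⟩) else 1

/-- `H_α := H_{α₁} ⋯ H_{α_ℓ}`, with `H_∅ = 1`. -/
noncomputable def Hcomp (α : List ℕ) : NSym := (α.map Hgen).prod

/-- All coarsenings of a composition (each obtained by summing adjacent parts),
enumerated without repetition. -/
def coarsenings : List ℕ → List (List ℕ)
  | [] => [[]]
  | [a] => [[a]]
  | a :: b :: rest =>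
      ((coarsenings (b :: rest)).map (a :: ·)) ++ coarsenings ((a + b) :: rest)
termination_by l => l.length

/-- The noncommutative ribbon function `R_α = Σ_{β coarsens α} (−1)^{ℓ(α)−ℓ(β)} H_β`. -/
noncomputable def Rfun (α : List ℕ) : NSym :=
  ((coarsenings α).map (fun β => ((-1 : ℚ) ^ (α.length - β.length)) • Hcomp β)).sum

/-- The composition of `n` with descent set `S ∩ {1,…,n−1}` (the inverse of `Des`, realizing
the bijection between subsets of `{1,…,n−1}` and compositions of `n`). -/
def compOfDes (n : ℕ) (S : Finset ℕ) : List ℕ :=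
  if n = 0 then []
  else
    let l := ((S.filter (fun s => 1 ≤ s ∧ s < n)).sort (· ≤ ·)) ++ [n]
    (l.zip (0 :: l)).map (fun p => p.1 - p.2)

/-- The transpose (conjugate) `α^⊤ := rev(α^c)`, where the complement `α^c` is the unique
composition of `n = |α|` with descent set `{1,…,n−1} \ Des α`. -/
def conj (α : List ℕ) : List ℕ :=
  (compOfDes α.sum (Finset.Icc 1 (α.sum - 1) \ Des α)).reverse

/-- `α − εᵢ`: decrease the `i`-th part (0-based) of `α` by one. -/
def decAt (α : List ℕ) (i : ℕ) : List ℕ := α.set i (α.getD i 0 - 1)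

/-- The value of the skewing operator `D` on the basis monomial `H_{a₁}⋯H_{a_k}`
(encoded by the word `a = (a₁,…,a_k)`):  `Σᵢ H_{a₁}⋯H_{aᵢ−1}⋯H_{a_k}`, where `H_0 = 1`
(so a factor with `aᵢ = 1` is simply omitted). -/
noncomputable def DwordList (a : List ℕ) : NSym :=
  ((List.range a.length).map (fun i => Hcomp (a.set i (a.getD i 0 - 1)))).sum

/-- The ℚ-linear map `D : NSym → NSym` defined on the monomial basis by
`D(H_{a₁}⋯H_{a_k}) = Σᵢ H_{a₁}⋯H_{aᵢ−1}⋯H_{a_k}` (the derivation with `D(Hₙ) = H_{n−1}`,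
realizing the skewing operator `L₍₁₎^⊥`). -/
noncomputable def Dop : NSym →ₗ[ℚ] NSym :=
  Finsupp.lsum ℚ (fun w : FreeMonoid ℕ+ =>
    LinearMap.toSpanSingleton ℚ NSym
      (DwordList ((FreeMonoid.toList w).map (fun a : ℕ+ => (a : ℕ)))))
    ∘ₗ (MonoidAlgebra.coeffLinearEquiv ℚ).toLinearMap

section Algebra

lemma Hcomp_nil : Hcomp [] = 1 := rfl

lemma Hcomp_cons (a : ℕ) (l : List ℕ) : Hcomp (a :: l) = Hgen a * Hcomp l := by
  simp [Hcomp]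

lemma Hgen_zero : Hgen 0 = 1 := by simp [Hgen]

/-- turn a list of naturals into a list of positive naturals (junk on 0). -/
def pw (l : List ℕ) : List ℕ+ := l.map (fun a => ⟨max a 1, by omega⟩)

lemma pw_coe (l : List ℕ) (hl : ∀ a ∈ l, 0 < a) :
    (pw l).map (fun a : ℕ+ => (a : ℕ)) = l := by
  induction l with
  | nil => rfl
  | cons a t ih =>
    have ha : 0 < a := hl a (by simp)
    have h1 : max a 1 = a := by omega
    have ih' := ih (fun x hx => hl x (by simp [hx]))
    show ((⟨max a 1, by omega⟩ : ℕ+) : ℕ) :: (pw t).map (fun a : ℕ+ => (a : ℕ)) = a :: t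
    rw [ih']
    simp [h1]

lemma Hcomp_eq_of (l : List ℕ) (hl : ∀ a ∈ l, 0 < a) :
    Hcomp l = MonoidAlgebra.of ℚ (FreeMonoid ℕ+) (FreeMonoid.ofList (pw l)) := by
  induction l with
  | nil => simp [Hcomp, pw, FreeMonoid.ofList_nil, map_one]; rfl
  | cons a t ih =>
    have ha : 0 < a := hl a (by simp)
    rw [Hcomp_cons, ih (fun x hx => hl x (by simp [hx]))]
    have h2 : Hgen a = MonoidAlgebra.of ℚ (FreeMonoid ℕ+) (FreeMonoid.of ⟨a, ha⟩) := by
      simp [Hgen, ha]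
    rw [h2, ← map_mul]
    congr 1
    have h1 : (⟨max a 1, by omega⟩ : ℕ+) = ⟨a, ha⟩ := by
      ext; simp; omega
    show FreeMonoid.of ⟨a, ha⟩ * FreeMonoid.ofList (pw t) = FreeMonoid.ofList (pw (a :: t))
    erw [← FreeMonoid.ofList_cons]
    exact congrArg (fun x => FreeMonoid.ofList (x :: pw t)) h1.symm

lemma Dop_single (w : FreeMonoid ℕ+) :
    Dop (MonoidAlgebra.single w (1:ℚ)) =
      DwordList ((FreeMonoid.toList w).map (fun a : ℕ+ => (a : ℕ))) := by
  rw [Dop, LinearMap.comp_apply]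
  erw [Finsupp.lsum_single]
  rw [LinearMap.toSpanSingleton_apply, one_smul]

lemma Dop_Hcomp (l : List ℕ) (hl : ∀ a ∈ l, 0 < a) :
    Dop (Hcomp l) = DwordList l := by
  rw [Hcomp_eq_of l hl]
  have h0 : (MonoidAlgebra.of ℚ (FreeMonoid ℕ+) (FreeMonoid.ofList (pw l)))
      = MonoidAlgebra.single (FreeMonoid.ofList (pw l)) (1 : ℚ) := rfl
  rw [h0, Dop_single]
  congr 1
  rw [FreeMonoid.toList_ofList]
  exact pw_coe l hl

end Algebra
section Rrec

lemma mul_list_sum (x : NSym) {β : Type*} (f : β → NSym) (l : List β) :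
    x * (l.map f).sum = (l.map (fun b => x * f b)).sum := by
  induction l with
  | nil => simp
  | cons a t ih => simp [mul_add, ih]

lemma neg_list_sum {β : Type*} (f : β → NSym) (l : List β) :
    -((l.map f).sum) = (l.map (fun b => -(f b))).sum := by
  induction l with
  | nil => simp
  | cons a t ih => rw [List.map_cons, List.sum_cons, neg_add, ih, List.map_cons, List.sum_cons]

lemma DwordList_nil : DwordList [] = 0 := rfl

lemma DwordList_cons (a : ℕ) (l : List ℕ) :
    DwordList (a :: l) = Hcomp ((a - 1) :: l) + Hgen a * DwordList l := by
  unfold DwordList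
  rw [List.length_cons, List.range_succ_eq_map, List.map_cons, List.sum_cons, List.map_map]
  congr 1
  rw [mul_list_sum]
  apply congrArg List.sum
  apply List.map_congr_left
  intro i _hi
  simp [Function.comp, Hcomp_cons]

lemma coarsenings_ne_nil_mem {α : List ℕ} (hα : α ≠ []) :
    ∀ β ∈ coarsenings α, β ≠ [] := by
  induction α using coarsenings.induct with
  | case1 => simp at hα
  | case2 a => intro β hβ; simp [coarsenings] at hβ; simp [hβ]
  | case3 a b rest ih1 ih2 =>
    intro β hβ
    rw [coarsenings] at hβ
    rcases List.mem_append.1 hβ with h | h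
    · obtain ⟨γ, _, rfl⟩ := List.mem_map.1 h
      simp
    · exact ih2 (by simp) β h

lemma coarsenings_pos {α : List ℕ} (hα : ∀ a ∈ α, 0 < a) :
    ∀ β ∈ coarsenings α, ∀ a ∈ β, 0 < a := by
  induction α using coarsenings.induct with
  | case1 => intro β hβ; simp [coarsenings] at hβ; simp [hβ]
  | case2 a =>
    intro β hβ; simp [coarsenings] at hβ; simp [hβ]
    exact hα a (by simp)
  | case3 a b rest ih1 ih2 =>
    intro β hβ
    rw [coarsenings] at hβ
    rcases List.mem_append.1 hβ with h | h
    · obtain ⟨γ, hγ, rfl⟩ := List.mem_map.1 h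
      intro x hx
      rcases List.mem_cons.1 hx with rfl | hx
      · exact hα x (by simp)
      · exact ih1 (fun y hy => hα y (by simp at hy ⊢; tauto)) γ hγ x hx
    · refine ih2 ?_ β h
      intro x hx
      rcases List.mem_cons.1 hx with rfl | hx
      · have := hα a (by simp); have := hα b (by simp); omega
      · exact hα x (by simp [hx])

lemma coarsenings_length_le {α : List ℕ} :
    ∀ β ∈ coarsenings α, β.length ≤ α.length := by
  induction α using coarsenings.induct with
  | case1 => intro β hβ; simp [coarsenings] at hβ; simp [hβ]
  | case2 a => intro β hβ; simp [coarsenings] at hβ; simp [hβ]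
  | case3 a b rest ih1 ih2 =>
    intro β hβ
    rw [coarsenings] at hβ
    rcases List.mem_append.1 hβ with h | h
    · obtain ⟨γ, hγ, rfl⟩ := List.mem_map.1 h
      have := ih1 γ hγ
      simpa using this
    · have := ih2 β h
      simp at this ⊢
      omega

lemma Rfun_single (a : ℕ) : Rfun [a] = Hgen a := by
  simp [Rfun, coarsenings, Hcomp]

lemma Rfun_cons (a c : ℕ) (s : List ℕ) :
    Rfun (a :: c :: s) = Hgen a * Rfun (c :: s) - Rfun ((a + c) :: s) := by
  unfold Rfun
  rw [coarsenings, List.map_append, List.sum_append, List.map_map]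
  have h1 : (List.map ((fun β => ((-1:ℚ)) ^ ((a :: c :: s).length - β.length) • Hcomp β)
        ∘ (fun x => a :: x)) (coarsenings (c::s))).sum
      = Hgen a * (List.map (fun β => ((-1:ℚ)) ^ ((c :: s).length - β.length) • Hcomp β)
        (coarsenings (c::s))).sum := by
    rw [mul_list_sum]
    apply congrArg List.sum
    apply List.map_congr_left
    intro β _hβ
    simp only [Function.comp]
    rw [Hcomp_cons, List.length_cons, List.length_cons, List.length_cons, Nat.succ_sub_succ,
      mul_smul_comm]
  have h2 : (List.map (fun β => ((-1:ℚ)) ^ ((a :: c :: s).length - β.length) • Hcomp β)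
        (coarsenings ((a+c)::s))).sum
      = -(List.map (fun β => ((-1:ℚ)) ^ (((a+c) :: s).length - β.length) • Hcomp β)
        (coarsenings ((a+c)::s))).sum := by
    rw [neg_list_sum]
    apply congrArg List.sum
    apply List.map_congr_left
    intro β hβ
    have hle := coarsenings_length_le β hβ
    have he : (a :: c :: s).length - β.length = (((a+c) :: s).length - β.length) + 1 := by
      simp at hle ⊢; omega
    rw [he, pow_succ, mul_smul, neg_one_smul, smul_neg]
  rw [h1, h2, sub_eq_add_neg]

end Rrec
section Key

noncomputable def DR (α : List ℕ) : NSym :=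
  ((coarsenings α).map (fun β => ((-1 : ℚ) ^ (α.length - β.length)) • DwordList β)).sum

lemma list_sum_add_map {β : Type*} (f g : β → NSym) (l : List β) :
    (l.map (fun b => f b + g b)).sum = (l.map f).sum + (l.map g).sum := by
  induction l with
  | nil => simp
  | cons a t ih => simp [ih]; abel

lemma Dop_Rfun {α : List ℕ} (hα : ∀ a ∈ α, 0 < a) : Dop (Rfun α) = DR α := by
  unfold Rfun DR
  rw [map_list_sum, List.map_map]
  apply congrArg List.sum
  apply List.map_congr_left
  intro β hβ
  simp only [Function.comp, map_smul]
  rw [Dop_Hcomp β (coarsenings_pos hα β hβ)]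

lemma Hcomp_singleton (a : ℕ) : Hcomp [a] = Hgen a := by simp [Hcomp]

lemma DR_cons (a c : ℕ) (s : List ℕ) :
    DR (a :: c :: s) = Hgen (a-1) * Rfun (c :: s) + Hgen a * DR (c :: s) - DR ((a+c) :: s) := by
  unfold DR
  rw [coarsenings, List.map_append, List.sum_append, List.map_map]
  have h1 : (List.map ((fun β => ((-1:ℚ)) ^ ((a :: c :: s).length - β.length) • DwordList β)
        ∘ (fun x => a :: x)) (coarsenings (c::s))).sum
      = Hgen (a-1) * Rfun (c::s) + Hgen a * DR (c::s) := by
    unfold Rfun DR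
    rw [mul_list_sum, mul_list_sum, ← list_sum_add_map]
    apply congrArg List.sum
    apply List.map_congr_left
    intro β _hβ
    simp only [Function.comp]
    rw [List.length_cons, List.length_cons, List.length_cons, Nat.succ_sub_succ,
      DwordList_cons, smul_add, Hcomp_cons, mul_smul_comm, mul_smul_comm]
  have h2 : (List.map (fun β => ((-1:ℚ)) ^ ((a :: c :: s).length - β.length) • DwordList β)
        (coarsenings ((a+c)::s))).sum
      = -(List.map (fun β => ((-1:ℚ)) ^ (((a+c) :: s).length - β.length) • DwordList β)
        (coarsenings ((a+c)::s))).sum := by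
    rw [neg_list_sum]
    apply congrArg List.sum
    apply List.map_congr_left
    intro β hβ
    have hle := coarsenings_length_le β hβ
    have he : (a :: c :: s).length - β.length = (((a+c) :: s).length - β.length) + 1 := by
      simp at hle ⊢; omega
    rw [he, pow_succ, mul_smul, neg_one_smul, smul_neg]
  rw [h1, h2, sub_eq_add_neg]
  rfl

/-- compositions obtained by decreasing a part `> 1` by one. -/
def decs : List ℕ → List (List ℕ)
  | [] => []
  | a :: t => (if 1 < a then [(a-1) :: t] else []) ++ (decs t).map (a :: ·)

/-- compositions obtained by merging two adjacent parts into their sum minus one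
(one representative per run). -/
def merges : List ℕ → List (List ℕ)
  | [] => []
  | [_] => []
  | a :: b :: t => (if 1 < b ∨ t = [] then [(a+b-1) :: t] else [])
      ++ (merges (b :: t)).map (a :: ·)

def addHead (a : ℕ) : List ℕ → List ℕ
  | [] => []
  | c :: s => (a + c) :: s

noncomputable def totalR (α : List ℕ) : NSym := ((decs α ++ merges α).map Rfun).sum

lemma decs_ne_nil {α : List ℕ} : ∀ γ ∈ decs α, γ ≠ [] := by
  induction α with
  | nil => simp [decs]
  | cons a t ih =>
    intro γ hγ
    simp only [decs, List.mem_append] at hγ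
    rcases hγ with h | h
    · rcases (by split at h <;> simp_all : γ = (a-1) :: t) with rfl; simp
    · obtain ⟨δ, _, rfl⟩ := List.mem_map.1 h; simp

lemma merges_ne_nil {α : List ℕ} : ∀ γ ∈ merges α, γ ≠ [] := by
  induction α using merges.induct with
  | case1 => simp [merges]
  | case2 a => simp [merges]
  | case3 a b t ih =>
    intro γ hγ
    simp only [merges, List.mem_append] at hγ
    rcases hγ with h | h
    · rcases (by split at h <;> simp_all : γ = (a+b-1) :: t) with rfl; simp
    · obtain ⟨δ, _, rfl⟩ := List.mem_map.1 h; simp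

lemma merges_addHead (a b : ℕ) (t : List ℕ) (hb : 0 < b) :
    merges ((a+b) :: t) = (merges (b :: t)).map (addHead a) := by
  cases t with
  | nil => simp [merges]
  | cons c s =>
    rw [merges, merges, List.map_append, List.map_map]
    have h1 : (if 1 < c ∨ s = [] then [(a+b+c-1) :: s] else ([] : List (List ℕ)))
        = List.map (addHead a) (if 1 < c ∨ s = [] then [(b+c-1) :: s] else []) := by
      split
      · simp only [List.map_cons, List.map_nil, addHead]
        congr 3
        omega
      · simp
    have h2 : List.map (fun x => (a+b) :: x) (merges (c :: s))
        = List.map (addHead a ∘ (fun x => b :: x)) (merges (c::s)) := by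
      apply List.map_congr_left
      intro γ _
      simp [Function.comp, addHead]
    rw [h1, h2]

lemma sum_Rfun_cons (a : ℕ) (L : List (List ℕ)) (h : ∀ γ ∈ L, γ ≠ []) :
    (L.map (fun γ => Rfun (a :: γ))).sum
      = Hgen a * (L.map Rfun).sum - (L.map (fun γ => Rfun (addHead a γ))).sum := by
  induction L with
  | nil => simp
  | cons γ t ih =>
    obtain ⟨c, s, rfl⟩ : ∃ c s, γ = c :: s := by
      cases γ with
      | nil => exact absurd rfl (h [] (by simp))
      | cons c s => exact ⟨c, s, rfl⟩
    rw [List.map_cons, List.sum_cons, ih (fun γ hγ => h γ (by simp [hγ])),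
      List.map_cons, List.sum_cons, List.map_cons, List.sum_cons, Rfun_cons,
      mul_add]
    show _ = Hgen a * Rfun (c :: s) + Hgen a * _ - (Rfun (addHead a (c :: s)) + _)
    rw [show addHead a (c :: s) = (a + c) :: s from rfl]
    abel

end Key
section KeyMain

lemma totalR_def (α : List ℕ) : totalR α = ((decs α ++ merges α).map Rfun).sum := rfl

lemma totalR_expand (a c : ℕ) (s : List ℕ) :
    totalR (a :: c :: s) = (if 1 < a then Rfun ((a-1) :: c :: s) else 0)
      + ((if 1 < c ∨ s = [] then Rfun ((a+c-1) :: s) else 0)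
      + ((decs (c :: s) ++ merges (c :: s)).map (fun γ => Rfun (a :: γ))).sum) := by
  rw [totalR_def]
  show ((((if 1 < a then [(a-1) :: c :: s] else []) ++ (decs (c :: s)).map (a :: ·))
      ++ ((if 1 < c ∨ s = [] then [(a+c-1) :: s] else [])
          ++ (merges (c :: s)).map (a :: ·))).map Rfun).sum = _
  simp only [List.map_append, List.sum_append, List.map_map]
  have hd : (List.map (Rfun ∘ (fun x => a :: x)) (decs (c :: s))).sum
      = (List.map ((fun γ => Rfun (a :: γ))) (decs (c :: s))).sum := rfl
  have hm : (List.map (Rfun ∘ (fun x => a :: x)) (merges (c :: s))).sum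
      = (List.map ((fun γ => Rfun (a :: γ))) (merges (c :: s))).sum := rfl
  rw [hd, hm]
  have h1 : ((if 1 < a then [(a-1) :: c :: s] else []).map Rfun).sum
      = (if 1 < a then Rfun ((a-1) :: c :: s) else 0) := by split <;> simp
  have h2 : ((if 1 < c ∨ s = [] then [(a+c-1) :: s] else []).map Rfun).sum
      = (if 1 < c ∨ s = [] then Rfun ((a+c-1) :: s) else 0) := by split <;> simp
  rw [h1, h2]
  abel

lemma key_e2 (a c : ℕ) (s : List ℕ) :
    ((decs (c :: s) ++ merges (c :: s)).map (fun γ => Rfun (a :: γ))).sum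
      = Hgen a * totalR (c :: s)
        - (((decs (c :: s)).map (fun γ => Rfun (addHead a γ))).sum
           + ((merges (c :: s)).map (fun γ => Rfun (addHead a γ))).sum) := by
  rw [sum_Rfun_cons a _ (by
    intro γ hγ
    rcases List.mem_append.1 hγ with h | h
    exacts [decs_ne_nil γ h, merges_ne_nil γ h])]
  congr 1
  rw [List.map_append, List.sum_append]

lemma key_e3 (a c : ℕ) (s : List ℕ) :
    ((decs (c :: s)).map (fun γ => Rfun (addHead a γ))).sum
      = (if 1 < c then Rfun ((a+c-1) :: s) else 0)
        + ((decs s).map (fun γ => Rfun ((a+c) :: γ))).sum := by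
  show ((((if 1 < c then [(c-1) :: s] else []) ++ (decs s).map (c :: ·)).map
      (fun γ => Rfun (addHead a γ))).sum) = _
  rw [List.map_append, List.sum_append, List.map_map]
  congr 1
  · by_cases hc2 : 1 < c
    · rw [if_pos hc2, if_pos hc2]
      have h : a + (c - 1) = a + c - 1 := by omega
      simp [addHead, h]
    · rw [if_neg hc2, if_neg hc2]
      simp

lemma key_e4 (a c : ℕ) (s : List ℕ) (hc : 0 < c) :
    ((merges (c :: s)).map (fun γ => Rfun (addHead a γ))).sum
      = ((merges ((a+c) :: s)).map Rfun).sum := by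
  rw [merges_addHead a c s hc, List.map_map]
  rfl

lemma key_e5 (a c : ℕ) (s : List ℕ) (ha : 0 < a) (hc : 0 < c) :
    totalR ((a+c) :: s) = Rfun ((a+c-1) :: s)
      + (((decs s).map (fun γ => Rfun ((a+c) :: γ))).sum
         + ((merges ((a+c) :: s)).map Rfun).sum) := by
  rw [totalR_def]
  show ((((if 1 < a + c then [(a+c-1) :: s] else []) ++ (decs s).map ((a+c) :: ·))
      ++ merges ((a+c) :: s)).map Rfun).sum = _
  rw [if_pos (by omega : 1 < a + c), List.map_append, List.sum_append,
    List.map_append, List.sum_append, List.map_map]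
  simp only [List.map_cons, List.map_nil, List.sum_cons, List.sum_nil, add_zero]
  have hd : (List.map (Rfun ∘ (fun x => (a+c) :: x)) (decs s)).sum
      = (List.map ((fun γ => Rfun ((a+c) :: γ))) (decs s)).sum := rfl
  rw [hd]
  abel

lemma totalR_cons_key (a c : ℕ) (s : List ℕ) (ha : 0 < a) (hc : 0 < c) :
    totalR (a :: c :: s) = Hgen (a-1) * Rfun (c :: s)
      + Hgen a * (totalR (c :: s) + (if c :: s = [1] then 1 else 0))
      - totalR ((a+c) :: s) := by
  rw [totalR_expand, key_e2, key_e3, key_e4 a c s hc, key_e5 a c s ha hc]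
  by_cases h1 : 1 < a
  · rw [if_pos h1, Rfun_cons, show a - 1 + c = a + c - 1 from by omega]
    by_cases h2 : 1 < c
    · rw [if_pos h2, if_pos (Or.inl h2), if_neg (by intro h; simp at h; omega)]
      rw [mul_add, mul_zero, add_zero]
      abel
    · have hc1 : c = 1 := by omega
      subst hc1
      rw [if_neg h2]
      by_cases h3 : s = []
      · subst h3
        rw [if_pos (Or.inr rfl), if_pos rfl]
        rw [show a + 1 - 1 = a from by omega, Rfun_single, Rfun_single, mul_add, mul_one]
        abel
      · rw [if_neg (by simp [h3]), if_neg (by intro h; simp at h; exact h3 h)]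
        rw [mul_add, mul_zero, add_zero]
        abel
  · have ha1 : a = 1 := by omega
    subst ha1
    rw [if_neg h1, show (1:ℕ) - 1 = 0 from rfl, Hgen_zero, one_mul,
      show 1 + c - 1 = c from by omega]
    by_cases h2 : 1 < c
    · rw [if_pos h2, if_pos (Or.inl h2), if_neg (by intro h; simp at h; omega)]
      rw [mul_add, mul_zero, add_zero]
      abel
    · have hc1 : c = 1 := by omega
      subst hc1
      rw [if_neg h2]
      by_cases h3 : s = []
      · subst h3
        rw [if_pos (Or.inr rfl), if_pos rfl, Rfun_single, mul_add, mul_one]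
        abel
      · rw [if_neg (by simp [h3]), if_neg (by intro h; simp at h; exact h3 h)]
        rw [mul_add, mul_zero, add_zero]
        abel

theorem key (N : ℕ) : ∀ (α : List ℕ), α.length ≤ N → (∀ x ∈ α, 0 < x) → α ≠ [] →
    Dop (Rfun α) = totalR α + (if α = [1] then 1 else 0) := by
  induction N with
  | zero =>
    intro α h hp hne
    cases α with
    | nil => exact absurd rfl hne
    | cons a t => simp at h
  | succ N ih =>
    intro α hlen hp hne
    match α with
    | [a] =>
      have ha : 0 < a := hp a (by simp)
      rw [Rfun_single, ← Hcomp_singleton, Dop_Hcomp _ (by simpa using ha),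
        DwordList_cons, DwordList_nil, mul_zero, add_zero, Hcomp_singleton]
      have ht : totalR [a] = (if 1 < a then Rfun [a-1] else 0) := by
        rw [totalR_def]
        have hds : decs [a] = (if 1 < a then [[a-1]] else []) := by
          simp [decs]
        have hms : merges [a] = [] := by simp [merges]
        rw [hds, hms, List.append_nil]
        split <;> simp
      rw [ht]
      by_cases h1 : 1 < a
      · have hne1 : ¬ ([a] = [1]) := by simp; omega
        rw [if_neg hne1, if_pos h1, Rfun_single, add_zero]
      · have ha1 : a = 1 := by omega
        subst ha1
        rw [if_pos rfl, if_neg h1, Hgen_zero, zero_add]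
    | a :: c :: s =>
      have hp' : ∀ x ∈ c :: s, 0 < x := fun x hx => hp x (by simp at hx ⊢; tauto)
      have hpγ : ∀ x ∈ (a+c) :: s, 0 < x := by
        intro x hx
        rcases List.mem_cons.1 hx with rfl | hx
        · have := hp a (by simp); have := hp c (by simp); omega
        · exact hp x (by simp [hx])
      have ha : 0 < a := hp a (by simp)
      have hc : 0 < c := hp c (by simp)
      have hlen1 : (c :: s).length ≤ N := by simp at hlen ⊢; omega
      have hlen2 : ((a+c) :: s).length ≤ N := by simp at hlen ⊢; omega
      have hγne : ¬ (((a+c) :: s) = [1]) := by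
        intro h; simp at h; omega
      rw [Dop_Rfun hp, DR_cons, ← Dop_Rfun hp', ← Dop_Rfun hpγ,
        ih _ hlen1 hp' (by simp), ih _ hlen2 hpγ (by simp),
        if_neg hγne, add_zero, totalR_cons_key a c s ha hc,
        if_neg (by simp : ¬ (a :: c :: s = [1]))]
      abel

end KeyMain
section Words

def incK (k : ℕ) : List ℕ → List ℕ
  | [] => []
  | c :: s => (c + k) :: s

def compW : List Bool → List ℕ
  | [] => [1]
  | true :: w => 1 :: compW w
  | false :: w => incK 1 (compW w)

def wordC : List ℕ → List Bool
  | [] => []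
  | [a] => List.replicate (a-1) false
  | a :: b :: t => List.replicate (a-1) false ++ true :: wordC (b :: t)

def tps : List Bool → List ℕ
  | [] => []
  | true :: w => 1 :: (tps w).map (· + 1)
  | false :: w => (tps w).map (· + 1)

def dfrom : ℕ → List ℕ → List ℕ
  | _, [] => []
  | z, x :: xs => (x - z) :: dfrom x xs

lemma incK_zero (l : List ℕ) : incK 0 l = l := by cases l <;> simp [incK]

lemma incK_one_incK (k : ℕ) (l : List ℕ) : incK 1 (incK k l) = incK (k+1) l := by
  cases l <;> simp [incK]
  omega

lemma compW_ne_nil (w : List Bool) : compW w ≠ [] := by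
  induction w with
  | nil => simp [compW]
  | cons c w ih =>
    cases c
    · simp only [compW]
      cases h : compW w with
      | nil => exact absurd h ih
      | cons x xs => simp [incK]
    · simp [compW]

lemma compW_pos (w : List Bool) : ∀ x ∈ compW w, 0 < x := by
  induction w with
  | nil => simp [compW]
  | cons c w ih =>
    cases c
    · simp only [compW]
      cases h : compW w with
      | nil => exact absurd h (compW_ne_nil w)
      | cons x xs =>
        intro y hy
        simp [incK] at hy
        rcases hy with rfl | hy
        · omega
        · exact ih y (by simp [h, hy])
    · simp only [compW]
      intro y hy
      rcases List.mem_cons.1 hy with rfl | hy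
      · omega
      · exact ih y hy

lemma compW_replicate (k : ℕ) (v : List Bool) :
    compW (List.replicate k false ++ v) = incK k (compW v) := by
  induction k with
  | zero => simp [incK_zero]
  | succ k ih =>
    rw [List.replicate_succ, List.cons_append]
    show incK 1 (compW (List.replicate k false ++ v)) = _
    rw [ih, incK_one_incK]

lemma wordC_cons (a : ℕ) (t : List ℕ) (ht : t ≠ []) :
    wordC (a :: t) = List.replicate (a-1) false ++ true :: wordC t := by
  cases t with
  | nil => exact absurd rfl ht
  | cons b s => rfl

lemma compW_wordC (α : List ℕ) (hne : α ≠ []) (hp : ∀ x ∈ α, 0 < x) :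
    compW (wordC α) = α := by
  induction α with
  | nil => exact absurd rfl hne
  | cons a t ih =>
    have ha : 0 < a := hp a (by simp)
    cases t with
    | nil =>
      show compW (List.replicate (a-1) false) = [a]
      rw [← List.append_nil (List.replicate (a-1) false), compW_replicate]
      show incK (a-1) [1] = [a]
      simp [incK]
      omega
    | cons b s =>
      rw [wordC_cons a (b::s) (by simp), compW_replicate]
      show incK (a-1) (1 :: compW (wordC (b :: s))) = _
      rw [ih (by simp) (fun x hx => hp x (by simp at hx ⊢; tauto))]
      simp [incK]
      omega

lemma wordC_compW (w : List Bool) : wordC (compW w) = w := by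
  induction w with
  | nil => rfl
  | cons c w ih =>
    cases hw : compW w with
    | nil => exact absurd hw (compW_ne_nil w)
    | cons x xs =>
      have hx : 0 < x := compW_pos w x (by simp [hw])
      cases c
      · show wordC (incK 1 (compW w)) = false :: w
        rw [hw]
        show wordC ((x+1) :: xs) = false :: w
        rw [← ih, hw]
        cases xs with
        | nil =>
          show List.replicate (x+1-1) false = false :: List.replicate (x-1) false
          rw [show x + 1 - 1 = (x-1) + 1 from by omega, List.replicate_succ]
        | cons d s' =>
          rw [wordC_cons _ (d::s') (by simp), wordC_cons _ (d::s') (by simp),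
            show x + 1 - 1 = (x-1) + 1 from by omega, List.replicate_succ]
          simp
      · show wordC (1 :: compW w) = true :: w
        rw [hw, wordC_cons _ (x::xs) (by simp), ← hw, ih]
        simp

lemma tps_bounds (w : List Bool) : ∀ x ∈ tps w, 1 ≤ x ∧ x ≤ w.length := by
  induction w with
  | nil => simp [tps]
  | cons c w ih =>
    cases c
    · intro x hx
      simp only [tps] at hx
      obtain ⟨y, hy, rfl⟩ := List.mem_map.1 hx
      have := ih y hy
      simp
      omega
    · intro x hx
      simp only [tps] at hx
      rcases List.mem_cons.1 hx with rfl | hx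
      · simp
      · obtain ⟨y, hy, rfl⟩ := List.mem_map.1 hx
        have := ih y hy
        simp
        omega

lemma tps_sorted (w : List Bool) : List.Pairwise (· < ·) (tps w) := by
  induction w with
  | nil => simp [tps]
  | cons c w ih =>
    have hmap : List.Pairwise (· < ·) ((tps w).map (· + 1)) := by
      rw [List.pairwise_map]
      exact ih.imp (by omega)
    cases c
    · exact hmap
    · refine List.pairwise_cons.2 ⟨?_, hmap⟩
      intro b hb
      obtain ⟨y, hy, rfl⟩ := List.mem_map.1 hb
      have := tps_bounds w y hy
      omega

lemma dfrom_zip (l : List ℕ) : ∀ z : ℕ,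
    ((l.zip (z :: l)).map (fun p => p.1 - p.2)) = dfrom z l := by
  induction l with
  | nil => intro z; rfl
  | cons x xs ih =>
    intro z
    show (x - z) :: ((xs.zip (x :: xs)).map (fun p => p.1 - p.2)) = _
    rw [ih x]
    rfl

lemma dfrom_shift (l : List ℕ) : ∀ z : ℕ, dfrom (z+1) (l.map (· + 1)) = dfrom z l := by
  induction l with
  | nil => intro z; rfl
  | cons x xs ih =>
    intro z
    show (x + 1 - (z+1)) :: dfrom (x+1) (xs.map (· + 1)) = (x - z) :: dfrom x xs
    rw [ih x, show x + 1 - (z + 1) = x - z from by omega]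

lemma dfrom_mapsucc (l : List ℕ) : dfrom 0 (l.map (· + 1)) = incK 1 (dfrom 0 l) := by
  cases l with
  | nil => rfl
  | cons x xs =>
    show (x + 1 - 0) :: dfrom (x+1) (xs.map (· + 1)) = incK 1 ((x - 0) :: dfrom x xs)
    rw [dfrom_shift xs x]
    simp [incK]

lemma dfrom_tps (w : List Bool) : dfrom 0 (tps w ++ [w.length + 1]) = compW w := by
  induction w with
  | nil => rfl
  | cons c w ih =>
    cases c
    · show dfrom 0 ((tps w).map (· + 1) ++ [w.length + 1 + 1]) = incK 1 (compW w)
      rw [show (tps w).map (· + 1) ++ [w.length + 1 + 1]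
          = (tps w ++ [w.length + 1]).map (· + 1) from by simp, dfrom_mapsucc, ih]
    · show dfrom 0 (1 :: ((tps w).map (· + 1) ++ [w.length + 1 + 1])) = 1 :: compW w
      rw [show (tps w).map (· + 1) ++ [w.length + 1 + 1]
          = (tps w ++ [w.length + 1]).map (· + 1) from by simp]
      show (1 - 0) :: dfrom 1 ((tps w ++ [w.length + 1]).map (· + 1)) = 1 :: compW w
      rw [show (1:ℕ) = 0 + 1 from rfl]
      rw [dfrom_shift, ih]

lemma tps_sort (w : List Bool) : ((tps w).toFinset).sort (· ≤ ·) = tps w := by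
  apply (List.toFinset_sort (r := (· ≤ ·)) ((tps_sorted w).nodup)).2
  exact (tps_sorted w).imp le_of_lt

lemma compOfDes_tps (w : List Bool) :
    compOfDes (w.length + 1) ((tps w).toFinset) = compW w := by
  unfold compOfDes
  rw [if_neg (by omega)]
  have hfil : ((tps w).toFinset).filter (fun s => 1 ≤ s ∧ s < w.length + 1)
      = (tps w).toFinset := by
    apply Finset.filter_true_of_mem
    intro x hx
    have := tps_bounds w x (List.mem_toFinset.1 hx)
    omega
  rw [hfil, tps_sort, dfrom_zip, dfrom_tps]

end Words
section ConjEq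

lemma tps_replicate (k : ℕ) (v : List Bool) :
    tps (List.replicate k false ++ v) = (tps v).map (· + k) := by
  induction k with
  | zero => simp
  | succ k ih =>
    rw [List.replicate_succ, List.cons_append]
    show (tps (List.replicate k false ++ v)).map (· + 1) = _
    rw [ih, List.map_map]
    apply List.map_congr_left
    intro x _
    simp
    omega

lemma sum_pos_of_pos {t : List ℕ} (ht : t ≠ []) (hp : ∀ x ∈ t, 0 < x) : 0 < t.sum := by
  cases t with
  | nil => exact absurd rfl ht
  | cons a s =>
    have := hp a (by simp)
    simp
    omega

/-- the list of partial sums underlying `Des`. -/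
def lDes (α : List ℕ) : List ℕ :=
  (List.range (α.length - 1)).map (fun i => (α.take (i + 1)).sum)

lemma Des_def' (α : List ℕ) : Des α = (lDes α).toFinset := rfl

lemma lDes_cons (a : ℕ) (t : List ℕ) (ht : t ≠ []) :
    lDes (a :: t) = a :: (lDes t).map (· + a) := by
  obtain ⟨m, hm⟩ : ∃ m, t.length = m + 1 := by
    cases t with
    | nil => exact absurd rfl ht
    | cons b s => exact ⟨s.length, by simp⟩
  unfold lDes
  rw [List.length_cons, hm, Nat.add_sub_cancel, Nat.succ_sub_one,
    List.range_succ_eq_map, List.map_cons, List.map_map, List.map_map]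
  refine congrArg₂ List.cons ?_ ?_
  · show ((a :: t).take (0 + 1)).sum = a
    simp
  · apply List.map_congr_left
    intro i _
    show ((a :: t).take (i + 1 + 1)).sum = (t.take (i+1)).sum + a
    rw [List.take_succ_cons, List.sum_cons]
    omega

lemma lDes_eq_tps (α : List ℕ) (hne : α ≠ []) (hp : ∀ x ∈ α, 0 < x) :
    lDes α = tps (wordC α) := by
  induction α with
  | nil => exact absurd rfl hne
  | cons a t ih =>
    have ha : 0 < a := hp a (by simp)
    cases t with
    | nil =>
      show lDes [a] = tps (List.replicate (a-1) false)
      rw [show List.replicate (a-1) false = List.replicate (a-1) false ++ [] from by simp,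
        tps_replicate]
      rfl
    | cons b s =>
      rw [lDes_cons a (b::s) (by simp), wordC_cons a (b::s) (by simp), tps_replicate,
        ih (by simp) (fun x hx => hp x (by simp at hx ⊢; tauto))]
      show _ = (1 :: (tps (wordC (b::s))).map (· + 1)).map (· + (a-1))
      rw [List.map_cons, List.map_map]
      refine congrArg₂ List.cons ?_ ?_
      · show a = 1 + (a - 1)
        omega
      · apply List.map_congr_left
        intro x _
        show x + a = x + 1 + (a - 1)
        omega

lemma Des_eq_tps (α : List ℕ) (hne : α ≠ []) (hp : ∀ x ∈ α, 0 < x) :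
    Des α = (tps (wordC α)).toFinset := by
  rw [Des_def', lDes_eq_tps α hne hp]

lemma image_succ_sdiff (m : ℕ) (T : Finset ℕ) (hT : ∀ y ∈ T, 1 ≤ y ∧ y ≤ m) :
    Finset.image (· + 1) (Finset.Icc 1 m \ T)
      = Finset.Icc 1 (m+1) \ insert 1 (Finset.image (· + 1) T) := by
  ext x
  constructor
  · intro hx
    obtain ⟨y, hy, rfl⟩ := Finset.mem_image.1 hx
    obtain ⟨hy1, hy2⟩ := Finset.mem_sdiff.1 hy
    have h12 := Finset.mem_Icc.1 hy1
    refine Finset.mem_sdiff.2 ⟨Finset.mem_Icc.2 ⟨by omega, by omega⟩, ?_⟩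
    intro hmem
    rcases Finset.mem_insert.1 hmem with h | h
    · omega
    · obtain ⟨z, hz, hzx⟩ := Finset.mem_image.1 h
      have hzy : z = y := by omega
      exact hy2 (hzy ▸ hz)
  · intro hx
    obtain ⟨hx1, hx2⟩ := Finset.mem_sdiff.1 hx
    have h12 := Finset.mem_Icc.1 hx1
    have hx1' : x ≠ 1 := fun h => hx2 (Finset.mem_insert.2 (Or.inl h))
    refine Finset.mem_image.2 ⟨x - 1,
      Finset.mem_sdiff.2 ⟨Finset.mem_Icc.2 ⟨by omega, by omega⟩, ?_⟩, by omega⟩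
    intro hmem
    exact hx2 (Finset.mem_insert.2 (Or.inr (Finset.mem_image.2 ⟨x-1, hmem, by omega⟩)))

lemma insert_one_image_succ (m : ℕ) (T : Finset ℕ) (hT : ∀ y ∈ T, 1 ≤ y ∧ y ≤ m) :
    insert 1 (Finset.image (· + 1) (Finset.Icc 1 m \ T))
      = Finset.Icc 1 (m+1) \ Finset.image (· + 1) T := by
  ext x
  constructor
  · intro hx
    rcases Finset.mem_insert.1 hx with rfl | hx
    · refine Finset.mem_sdiff.2 ⟨Finset.mem_Icc.2 ⟨le_refl 1, by omega⟩, ?_⟩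
      intro hmem
      obtain ⟨z, hz, hzx⟩ := Finset.mem_image.1 hmem
      have := hT z hz
      omega
    · obtain ⟨y, hy, rfl⟩ := Finset.mem_image.1 hx
      obtain ⟨hy1, hy2⟩ := Finset.mem_sdiff.1 hy
      have h12 := Finset.mem_Icc.1 hy1
      refine Finset.mem_sdiff.2 ⟨Finset.mem_Icc.2 ⟨by omega, by omega⟩, ?_⟩
      intro hmem
      obtain ⟨z, hz, hzx⟩ := Finset.mem_image.1 hmem
      have hzy : z = y := by omega
      exact hy2 (hzy ▸ hz)
  · intro hx
    obtain ⟨hx1, hx2⟩ := Finset.mem_sdiff.1 hx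
    have h12 := Finset.mem_Icc.1 hx1
    by_cases hx1' : x = 1
    · exact Finset.mem_insert.2 (Or.inl hx1')
    · refine Finset.mem_insert.2 (Or.inr (Finset.mem_image.2 ⟨x - 1,
        Finset.mem_sdiff.2 ⟨Finset.mem_Icc.2 ⟨by omega, by omega⟩, ?_⟩, by omega⟩))
      intro hmem
      exact hx2 (Finset.mem_image.2 ⟨x - 1, hmem, by omega⟩)

lemma list_toFinset_map (l : List ℕ) (f : ℕ → ℕ) :
    (l.map f).toFinset = l.toFinset.image f := by
  ext x
  simp

lemma tps_not (w : List Bool) :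
    (tps (w.map not)).toFinset = Finset.Icc 1 w.length \ (tps w).toFinset := by
  induction w with
  | nil => simp [tps]
  | cons c w ih =>
    cases c
    · show (tps (true :: w.map not)).toFinset = _
      show (1 :: (tps (w.map not)).map (· + 1)).toFinset
          = Finset.Icc 1 (w.length + 1) \ ((tps w).map (· + 1)).toFinset
      rw [List.toFinset_cons, list_toFinset_map, list_toFinset_map, ih]
      exact insert_one_image_succ w.length _ (fun y hy => tps_bounds w y (List.mem_toFinset.1 hy))
    · show (tps (false :: w.map not)).toFinset = _
      show ((tps (w.map not)).map (· + 1)).toFinset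
          = Finset.Icc 1 (w.length + 1) \ (1 :: (tps w).map (· + 1)).toFinset
      rw [list_toFinset_map, ih, List.toFinset_cons, list_toFinset_map]
      exact image_succ_sdiff w.length _ (fun y hy => tps_bounds w y (List.mem_toFinset.1 hy))

lemma wordC_length (α : List ℕ) (hne : α ≠ []) (hp : ∀ x ∈ α, 0 < x) :
    (wordC α).length = α.sum - 1 := by
  induction α with
  | nil => exact absurd rfl hne
  | cons a t ih =>
    have ha : 0 < a := hp a (by simp)
    cases t with
    | nil => simp [wordC]
    | cons b s =>
      rw [wordC_cons a (b::s) (by simp)]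
      have hts : 0 < (b::s).sum := sum_pos_of_pos (by simp) (fun x hx => hp x (by simp at hx ⊢; tauto))
      have := ih (by simp) (fun x hx => hp x (by simp at hx ⊢; tauto))
      simp at this hts ⊢
      omega

lemma conj_eq (α : List ℕ) (hne : α ≠ []) (hp : ∀ x ∈ α, 0 < x) :
    conj α = (compW ((wordC α).map not)).reverse := by
  unfold conj
  congr 1
  have hsum : 0 < α.sum := sum_pos_of_pos hne hp
  have hlen := wordC_length α hne hp
  have h1 : Finset.Icc 1 (α.sum - 1) \ Des α = (tps ((wordC α).map not)).toFinset := by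
    rw [Des_eq_tps α hne hp, tps_not, hlen]
  rw [h1, show α.sum = ((wordC α).map not).length + 1 from by simp [hlen]; omega,
    compOfDes_tps]

end ConjEq
section ConjRec

def incLast (l : List ℕ) : List ℕ := (incK 1 l.reverse).reverse

lemma incLast_append (l : List ℕ) (x : ℕ) : incLast (l ++ [x]) = l ++ [x+1] := by
  unfold incLast
  rw [List.reverse_append]
  show (incK 1 (x :: l.reverse)).reverse = _
  show ((x+1) :: l.reverse).reverse = _
  rw [List.reverse_cons, List.reverse_reverse]

lemma conj_ne_nil (α : List ℕ) (hne : α ≠ []) (hp : ∀ x ∈ α, 0 < x) : conj α ≠ [] := by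
  rw [conj_eq α hne hp]
  simp [compW_ne_nil]

lemma conj_pos (α : List ℕ) (hne : α ≠ []) (hp : ∀ x ∈ α, 0 < x) :
    ∀ x ∈ conj α, 0 < x := by
  rw [conj_eq α hne hp]
  intro x hx
  exact compW_pos _ x (List.mem_reverse.1 hx)

lemma wordC_one_cons (t : List ℕ) (ht : t ≠ []) : wordC (1 :: t) = true :: wordC t := by
  rw [wordC_cons 1 t ht]
  simp

lemma wordC_succ_cons (a : ℕ) (ha : 0 < a) (t : List ℕ) :
    wordC ((a+1) :: t) = false :: wordC (a :: t) := by
  cases t with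
  | nil =>
    show List.replicate (a+1-1) false = false :: List.replicate (a-1) false
    rw [show a + 1 - 1 = (a-1) + 1 from by omega, List.replicate_succ]
  | cons b s =>
    rw [wordC_cons _ (b::s) (by simp), wordC_cons _ (b::s) (by simp),
      show a + 1 - 1 = (a-1) + 1 from by omega, List.replicate_succ]
    simp

lemma conj_succ (a : ℕ) (ha : 0 < a) (t : List ℕ) (hp : ∀ x ∈ t, 0 < x) :
    conj ((a+1) :: t) = conj (a :: t) ++ [1] := by
  have hp1 : ∀ x ∈ (a+1) :: t, 0 < x := by
    intro x hx; rcases List.mem_cons.1 hx with rfl | hx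
    · omega
    · exact hp x hx
  have hp2 : ∀ x ∈ a :: t, 0 < x := by
    intro x hx; rcases List.mem_cons.1 hx with rfl | hx
    · omega
    · exact hp x hx
  rw [conj_eq _ (by simp) hp1, conj_eq _ (by simp) hp2, wordC_succ_cons a ha t]
  show (compW (true :: (wordC (a :: t)).map not)).reverse = _
  show (1 :: compW ((wordC (a :: t)).map not)).reverse = _
  rw [List.reverse_cons]

lemma conj_one_cons (t : List ℕ) (ht : t ≠ []) (hp : ∀ x ∈ t, 0 < x) :
    conj (1 :: t) = incLast (conj t) := by
  have hp1 : ∀ x ∈ 1 :: t, 0 < x := by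
    intro x hx; rcases List.mem_cons.1 hx with rfl | hx
    · omega
    · exact hp x hx
  rw [conj_eq _ (by simp) hp1, conj_eq _ ht hp, wordC_one_cons t ht]
  show (compW (false :: (wordC t).map not)).reverse = _
  show (incK 1 (compW ((wordC t).map not))).reverse = _
  unfold incLast
  rw [List.reverse_reverse]

lemma conj_singleton (a : ℕ) (ha : 0 < a) : conj [a] = List.replicate a 1 := by
  induction a with
  | zero => omega
  | succ a ih =>
    rcases Nat.eq_zero_or_pos a with rfl | ha'
    · rw [conj_eq [0+1] (by simp) (by simp)]
      rfl
    · rw [conj_succ a ha' [] (by simp), ih ha', List.replicate_succ' (n := a)]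

lemma wordC_append_last (l : List ℕ) (hl : l ≠ []) (a : ℕ) :
    wordC (l ++ [a]) = wordC l ++ true :: List.replicate (a-1) false := by
  induction l with
  | nil => exact absurd rfl hl
  | cons b l' ih =>
    cases l' with
    | nil =>
      show wordC [b, a] = _
      rw [wordC_cons b [a] (by simp)]
      rfl
    | cons c s =>
      rw [List.cons_append, wordC_cons b ((c::s) ++ [a]) (by simp),
        wordC_cons b (c::s) (by simp), ih (by simp)]
      simp

lemma wordC_reverse (α : List ℕ) : wordC (α.reverse) = (wordC α).reverse := by
  induction α with
  | nil => rfl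
  | cons a t ih =>
    cases t with
    | nil =>
      rw [List.reverse_singleton]
      show List.replicate (a-1) false = (List.replicate (a-1) false).reverse
      rw [List.reverse_replicate]
    | cons b s =>
      rw [List.reverse_cons, wordC_append_last _ (by simp) a, ih,
        wordC_cons a (b::s) (by simp), List.reverse_append, List.reverse_cons]
      simp

lemma compW_reverse (w : List Bool) : compW (w.reverse) = (compW w).reverse := by
  have h1 : w.reverse = wordC ((compW w).reverse) := by
    rw [wordC_reverse (compW w), wordC_compW]
  rw [h1, compW_wordC]
  · simp [compW_ne_nil]
  · intro x hx
    exact compW_pos w x (List.mem_reverse.1 hx)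

lemma conj_conj (α : List ℕ) (hne : α ≠ []) (hp : ∀ x ∈ α, 0 < x) :
    conj (conj α) = α := by
  have h1 := conj_eq α hne hp
  rw [conj_eq (conj α) (conj_ne_nil α hne hp) (conj_pos α hne hp), h1]
  have h2 : wordC ((compW ((wordC α).map not)).reverse)
      = ((wordC α).map not).reverse := by
    rw [wordC_reverse (compW ((wordC α).map not)), wordC_compW]
  rw [h2]
  have h3 : (((wordC α).map not).reverse).map not
      = ((((wordC α).map not).map not)).reverse := by
    simp
  rw [h3, List.map_map, show (not ∘ not) = id from by funext x; cases x <;> rfl, List.map_id]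
  rw [compW_reverse, List.reverse_reverse, compW_wordC α hne hp]

end ConjRec
section PermT

lemma conj_last (c : ℕ) (hc : 0 < c) (s : List ℕ) (hps : ∀ x ∈ s, 0 < x) :
    ∃ l x, conj (c :: s) = l ++ [x] ∧ 0 < x ∧ (x = 1 ↔ (1 < c ∨ s = [])) := by
  rcases Nat.lt_or_ge 1 c with hc2 | hc1
  · have hrw : c = (c-1) + 1 := by omega
    rw [hrw, conj_succ (c-1) (by omega) s hps]
    exact ⟨conj ((c-1) :: s), 1, rfl, one_pos, by simp; omega⟩
  · have hc1' : c = 1 := by omega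
    subst hc1'
    cases s with
    | nil =>
      refine ⟨[], 1, ?_, one_pos, by simp⟩
      rw [conj_singleton 1 one_pos]
      rfl
    | cons d s' =>
      have hds : ∀ x ∈ d :: s', 0 < x := hps
      rw [conj_one_cons (d :: s') (by simp) hds]
      rcases List.eq_nil_or_concat (conj (d :: s')) with h | ⟨l, y, h⟩
      · exact absurd h (conj_ne_nil _ (by simp) hds)
      · rw [List.concat_eq_append] at h
        have hy : 0 < y := conj_pos _ (by simp) hds y (by simp [h])
        rw [h, incLast_append]
        exact ⟨l, y + 1, rfl, by omega, by constructor <;> intro hh <;> simp_all⟩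

lemma decs_append (l : List ℕ) (y : ℕ) :
    decs (l ++ [y]) = (decs l).map (· ++ [y]) ++ (if 1 < y then [l ++ [y-1]] else []) := by
  induction l with
  | nil =>
    by_cases h : 1 < y <;> simp [decs, h]
  | cons a l' ih =>
    show (if 1 < a then [(a-1) :: (l' ++ [y])] else []) ++ (decs (l' ++ [y])).map (a :: ·) = _
    rw [ih, List.map_append, List.map_map]
    show _ = ((if 1 < a then [(a-1) :: l'] else []) ++ (decs l').map (a :: ·)).map (· ++ [y])
        ++ (if 1 < y then [(a :: l') ++ [y-1]] else [])
    rw [List.map_append, List.map_map]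
    by_cases h1 : 1 < a <;> by_cases h2 : 1 < y <;>
      simp [h1, h2, Function.comp, List.append_assoc]

lemma decs_replicate_one (k : ℕ) : decs (List.replicate k 1) = [] := by
  induction k with
  | zero => rfl
  | succ k ih =>
    rw [List.replicate_succ]
    show (if (1:ℕ) < 1 then [(1-1) :: List.replicate k 1] else [])
        ++ (decs (List.replicate k 1)).map (1 :: ·) = []
    rw [ih, if_neg (by omega)]
    rfl

lemma decs_pos {α : List ℕ} (hp : ∀ x ∈ α, 0 < x) :
    ∀ γ ∈ decs α, ∀ x ∈ γ, 0 < x := by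
  induction α with
  | nil => simp [decs]
  | cons a t ih =>
    intro γ hγ
    simp only [decs, List.mem_append] at hγ
    rcases hγ with h | h
    · rcases (by split at h <;> simp_all : γ = (a-1) :: t ∧ 1 < a) with ⟨rfl, ha⟩
      intro x hx
      rcases List.mem_cons.1 hx with rfl | hx
      · omega
      · exact hp x (by simp [hx])
    · obtain ⟨δ, hδ, rfl⟩ := List.mem_map.1 h
      intro x hx
      rcases List.mem_cons.1 hx with rfl | hx
      · exact hp x (by simp)
      · exact ih (fun y hy => hp y (by simp [hy])) δ hδ x hx

lemma merges_pos {α : List ℕ} (hp : ∀ x ∈ α, 0 < x) :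
    ∀ γ ∈ merges α, ∀ x ∈ γ, 0 < x := by
  induction α using merges.induct with
  | case1 => simp [merges]
  | case2 a => simp [merges]
  | case3 a b t ih =>
    intro γ hγ
    simp only [merges, List.mem_append] at hγ
    have ha : 0 < a := hp a (by simp)
    have hb : 0 < b := hp b (by simp)
    rcases hγ with h | h
    · rcases (by split at h <;> simp_all : γ = (a+b-1) :: t) with rfl
      intro x hx
      rcases List.mem_cons.1 hx with rfl | hx
      · omega
      · exact hp x (by simp [hx])
    · obtain ⟨δ, hδ, rfl⟩ := List.mem_map.1 h
      intro x hx
      rcases List.mem_cons.1 hx with rfl | hx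
      · exact hp x (by simp)
      · exact ih (fun y hy => hp y (by simp at hy ⊢; tauto)) δ hδ x hx

lemma perm_T_succ_step (b : ℕ) (hb : 0 < b) (t : List ℕ) (hpt : ∀ x ∈ t, 0 < x)
    (IH : ((merges (b :: t)).map conj).Perm (decs (conj (b :: t)))) :
    ((merges ((b+1) :: t)).map conj).Perm (decs (conj ((b+1) :: t))) := by
  have h1 : merges ((b+1) :: t) = (merges (b :: t)).map (addHead 1) := by
    rw [show b + 1 = 1 + b from by omega]
    exact merges_addHead 1 b t hb
  have hpbt : ∀ x ∈ b :: t, 0 < x := by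
    intro x hx; rcases List.mem_cons.1 hx with rfl | hx
    · exact hb
    · exact hpt x hx
  rw [h1, List.map_map, conj_succ b hb t hpt, decs_append, if_neg (by omega),
    List.append_nil]
  have h2 : List.map (conj ∘ addHead 1) (merges (b :: t))
      = List.map ((· ++ [1]) ∘ conj) (merges (b :: t)) := by
    apply List.map_congr_left
    intro γ hγ
    obtain ⟨c', s', rfl⟩ : ∃ c' s', γ = c' :: s' := by
      cases γ with
      | nil => exact absurd rfl (merges_ne_nil [] hγ)
      | cons c' s' => exact ⟨c', s', rfl⟩
    have hc' : 0 < c' := merges_pos hpbt _ hγ c' (by simp)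
    have hps' : ∀ x ∈ s', 0 < x := fun x hx => merges_pos hpbt _ hγ x (by simp [hx])
    show conj ((1 + c') :: s') = conj (c' :: s') ++ [1]
    rw [show 1 + c' = c' + 1 from by omega]
    exact conj_succ c' hc' s' hps'
  rw [h2, ← List.map_map]
  exact IH.map (· ++ [1])

lemma perm_T_one_step (c : ℕ) (hc : 0 < c) (s : List ℕ) (hps : ∀ x ∈ s, 0 < x)
    (IH : ((merges (c :: s)).map conj).Perm (decs (conj (c :: s)))) :
    ((merges (1 :: c :: s)).map conj).Perm (decs (conj (1 :: c :: s))) := by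
  have hpcs : ∀ x ∈ c :: s, 0 < x := by
    intro x hx; rcases List.mem_cons.1 hx with rfl | hx
    · exact hc
    · exact hps x hx
  obtain ⟨l, x, hdecomp, hxpos, hiff⟩ := conj_last c hc s hps
  rw [conj_one_cons (c :: s) (by simp) hpcs, hdecomp, incLast_append, decs_append,
    if_pos (by omega : 1 < x + 1), show x + 1 - 1 = x from by omega]
  have hm : merges (1 :: c :: s)
      = (if 1 < c ∨ s = [] then [c :: s] else []) ++ (merges (c :: s)).map (1 :: ·) := by
    show (if 1 < c ∨ s = [] then [(1+c-1) :: s] else []) ++ _ = _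
    rw [show 1 + c - 1 = c from by omega]
  rw [hm, List.map_append, List.map_map]
  have h2 : List.map (conj ∘ (1 :: ·)) (merges (c :: s))
      = List.map (incLast ∘ conj) (merges (c :: s)) := by
    apply List.map_congr_left
    intro γ hγ
    have hγne : γ ≠ [] := merges_ne_nil γ hγ
    have hγp : ∀ y ∈ γ, 0 < y := merges_pos hpcs γ hγ
    show conj (1 :: γ) = incLast (conj γ)
    exact conj_one_cons γ hγne hγp
  rw [h2]
  have hIH2 : (List.map (incLast ∘ conj) (merges (c :: s))).Perm
      (List.map incLast (decs (conj (c :: s)))) := by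
    rw [← List.map_map]
    exact IH.map incLast
  have h3 : List.map incLast (decs (l ++ [x]))
      = (decs l).map (· ++ [x+1]) ++ (if 1 < x then [l ++ [x]] else []) := by
    rw [decs_append, List.map_append, List.map_map]
    congr 1
    · apply List.map_congr_left
      intro γ _
      exact incLast_append γ x
    · by_cases hx : 1 < x
      · rw [if_pos hx, if_pos hx]
        show [incLast (l ++ [x-1])] = [l ++ [x]]
        rw [incLast_append, show x - 1 + 1 = x from by omega]
      · rw [if_neg hx, if_neg hx]
        rfl
  rw [hdecomp] at hIH2
  rw [h3] at hIH2
  by_cases hx1 : x = 1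
  · have hflag : 1 < c ∨ s = [] := hiff.1 hx1
    subst hx1
    rw [if_pos hflag]
    simp only [List.map_cons, List.map_nil]
    rw [hdecomp]
    rw [if_neg (by omega : ¬ (1:ℕ) < 1), List.append_nil] at hIH2
    refine List.Perm.trans (List.Perm.append_left _ hIH2) ?_
    exact List.perm_append_comm
  · have hx2 : 1 < x := by omega
    have hflag : ¬(1 < c ∨ s = []) := fun h => hx1 (hiff.2 h)
    rw [if_neg hflag]
    simp only [List.map_nil, List.nil_append]
    rw [if_pos hx2] at hIH2
    exact hIH2

theorem perm_T (n : ℕ) : ∀ α : List ℕ, α.sum ≤ n → α ≠ [] → (∀ x ∈ α, 0 < x) →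
    ((merges α).map conj).Perm (decs (conj α)) := by
  induction n with
  | zero =>
    intro α hs hne hp
    have := sum_pos_of_pos hne hp
    omega
  | succ n ih =>
    intro α hs hne hp
    match α with
    | [a] =>
      rw [conj_singleton a (hp a (by simp)), decs_replicate_one]
      show (List.map conj []).Perm []
      exact List.Perm.refl _
    | a :: c :: s =>
      have hc : 0 < c := hp c (by simp)
      have hps : ∀ x ∈ s, 0 < x := fun x hx => hp x (by simp [hx])
      have hpcs : ∀ x ∈ c :: s, 0 < x := fun x hx => hp x (by simp at hx ⊢; tauto)
      have ha : 0 < a := hp a (by simp)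
      rcases Nat.lt_or_ge 1 a with ha2 | ha1
      · have hIH : ((merges ((a-1) :: c :: s)).map conj).Perm
            (decs (conj ((a-1) :: c :: s))) := by
          apply ih _ (by simp at hs ⊢; omega) (by simp)
          intro x hx
          rcases List.mem_cons.1 hx with rfl | hx
          · omega
          · exact hpcs x hx
        have hstep := perm_T_succ_step (a-1) (by omega) (c :: s) hpcs hIH
        rwa [show a - 1 + 1 = a from by omega] at hstep
      · have ha1' : a = 1 := by omega
        subst ha1'
        exact perm_T_one_step c hc s hps (ih _ (by simp at hs ⊢; omega) (by simp) hpcs)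

end PermT
section Final

lemma finsum_decs : ∀ (α : List ℕ) (f : List ℕ → NSym),
    (∑ i ∈ (Finset.range α.length).filter (fun i => 1 < α.getD i 0), f (decAt α i))
      = ((decs α).map f).sum := by
  intro α
  induction α with
  | nil => intro f; simp [decs]
  | cons a t ih =>
    intro f
    have hg0 : (if 1 < (a :: t).getD 0 0 then f (decAt (a :: t) 0) else 0)
        = (if 1 < a then f ((a-1) :: t) else 0) := by
      simp [decAt]
    have hgs : ∀ i, (if 1 < (a :: t).getD (i+1) 0 then f (decAt (a :: t) (i+1)) else 0)
        = (if 1 < t.getD i 0 then f (a :: decAt t i) else 0) := by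
      intro i
      simp [decAt]
    have hr : ((decs (a :: t)).map f).sum
        = (if 1 < a then f ((a-1) :: t) else 0)
          + ((decs t).map (fun γ => f (a :: γ))).sum := by
      show ((((if 1 < a then [(a-1) :: t] else []) ++ (decs t).map (a :: ·)).map f)).sum = _
      rw [List.map_append, List.sum_append, List.map_map]
      congr 1
      split <;> simp
    have hsum : (∑ i ∈ Finset.range t.length,
          if 1 < (a :: t).getD (i+1) 0 then f (decAt (a :: t) (i+1)) else 0)
        = ((decs t).map (fun γ => f (a :: γ))).sum := by
      rw [Finset.sum_congr rfl (fun i _ => hgs i), ← Finset.sum_filter]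
      exact ih (fun γ => f (a :: γ))
    rw [Finset.sum_filter, List.length_cons, Finset.sum_range_succ', hsum, hg0, hr, add_comm]

end Final
/-- for `n ≥ 2` and a composition `α ⊨ n`,
`D(R_α) = Σ_{i : αᵢ > 1} R_{α−εᵢ} + Σ_{j : (α^⊤)ⱼ > 1} R_{(α^⊤−εⱼ)^⊤}` in `NSym`. -/
theorem skew_by_one_box_of_ribbon (n : ℕ) (hn : 2 ≤ n)
    (α : List ℕ) (hαs : α.sum = n) (hαp : ∀ a ∈ α, 0 < a) :
    Dop (Rfun α)
      = (∑ i ∈ (Finset.range α.length).filter (fun i => 1 < α.getD i 0),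
            Rfun (decAt α i))
        + (∑ j ∈ (Finset.range (conj α).length).filter
              (fun j => 1 < (conj α).getD j 0),
            Rfun (conj (decAt (conj α) j))) := by
  have hne : α ≠ [] := by
    intro h
    subst h
    simp at hαs
    omega
  have hne1 : α ≠ [1] := by
    intro h
    subst h
    simp at hαs
    omega
  rw [key α.length α le_rfl hαp hne, if_neg hne1, add_zero, totalR_def,
    List.map_append, List.sum_append]
  congr 1
  · exact (finsum_decs α Rfun).symm
  · rw [finsum_decs (conj α) (fun γ => Rfun (conj γ))]
    have hperm := perm_T α.sum α le_rfl hne hαp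
    have h1 : ((decs (conj α)).map (fun γ => Rfun (conj γ))).sum
        = (((merges α).map conj).map (fun γ => Rfun (conj γ))).sum :=
      ((hperm.map (fun γ => Rfun (conj γ))).sum_eq).symm
    rw [h1, List.map_map]
    apply congrArg List.sum
    apply List.map_congr_left
    intro γ hγ
    show Rfun γ = Rfun (conj (conj γ))
    rw [conj_conj γ (merges_ne_nil γ hγ) (merges_pos hαp γ hγ)]
end

section
/- Let ℓ ≥ 1, let α^(1),…,α^(ℓ) be compositions of n_1,…,n_ℓ (all positive), N = n_1+⋯+n_ℓ, p_j := n_1+⋯+n_j for 1 ≤ j ≤ ℓ−1, P := {p_1,…,p_{ℓ−1}}, and D := ⋃_{j=1}^ℓ {n_1+⋯+n_{j−1} + d : d ∈ Des(α^(j))}. For I ⊆ {1,…,ℓ−1}, let B(I) := {w ∈ S_N : Des(w) \ P = D and p_j ∉ Des(w) for all j ∈ I}. Define the cochain complex of ℚ-vector spaces with C^i := the free ℚ-vector space on pairs (I,w) with |I| = i and w ∈ B(I), and differential d : C^i → C^{i+1} given on basis vectors by d(I,w) := Σ_{j ∈ {1,…,ℓ−1}\I, p_j ∉ Des(w)} (−1)^{#{t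 ∈ I : t < j}} (I∪{j}, w). Then: (a) d∘d = 0; (b) for every i ≥ 1, ker(d : C^i → C^{i+1}) = im(d : C^{i−1} → C^i); and (c) ker(d : C^0 → C^1) is the span of the basis vectors (∅,w) with Des(w) = D ∪ P, so its dimension equals f^{α^(1)·α^(2)·⋯·α^(ℓ)}. (This is the ribbon complex C(⃗α) of Theorem 5.6 at the level of underlying vector spaces, in the word model for standard ribbon tableaux.) -/
open scoped BigOperators

/-- The ambient ℚ-vector space with basis the pairs `(I, w)`, `I` a finite set of natural
numbers and `w` a permutation of `{1,…,N}` where `N = n₁+⋯+n_ℓ`; the cochain complex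
`C(⃗α)` lives inside it as the graded family of subspaces `Cgrade A i`. -/
abbrev VS (A : List (List ℕ)) : Type :=
  (Finset ℕ × Equiv.Perm (Fin A.flatten.sum)) →₀ ℚ

/-- The value of the differential on the basis vector `(I, w)`:
`d(I,w) = Σ_{j ∈ {1,…,ℓ−1}\I, p_j ∉ Des(w)} (−1)^{#{t ∈ I : t < j}} (I∪{j}, w)`. -/
noncomputable def dBasis (A : List (List ℕ))
    (q : Finset ℕ × Equiv.Perm (Fin A.flatten.sum)) : VS A :=
  ∑ j ∈ ((Finset.Icc 1 (A.length - 1)) \ q.1).filter (fun j => pval A j ∉ permDes q.2),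
    ((-1 : ℚ) ^ ((q.1.filter (fun t => t < j)).card)) •
      Finsupp.single (insert j q.1, q.2) (1 : ℚ)

/-- The differential `d`, as a ℚ-linear endomorphism of the ambient space. -/
noncomputable def dmap (A : List (List ℕ)) : VS A →ₗ[ℚ] VS A :=
  Finsupp.lsum ℚ (fun q => LinearMap.toSpanSingleton ℚ (VS A) (dBasis A q))

/-- `C^i`: the subspace spanned by the basis vectors `(I, w)` with
`I ⊆ {1,…,ℓ−1}`, `|I| = i`, and `w ∈ B(I)`, i.e. `Des(w) \ P = D` and `p_j ∉ Des(w)` for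
all `j ∈ I`. -/
noncomputable def Cgrade (A : List (List ℕ)) (i : ℕ) : Submodule ℚ (VS A) :=
  Finsupp.supported ℚ ℚ
    {q | q.1 ⊆ Finset.Icc 1 (A.length - 1) ∧ q.1.card = i
      ∧ permDes q.2 \ Pset A = Dset A ∧ ∀ j ∈ q.1, pval A j ∉ permDes q.2}


section Lemmas

lemma mem_Des {γ : List ℕ} {x : ℕ} :
    x ∈ Des γ ↔ ∃ i, i + 1 < γ.length ∧ (γ.take (i + 1)).sum = x := by
  simp only [Des, List.mem_toFinset, List.mem_map, List.mem_range]
  constructor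
  · rintro ⟨i, hi, rfl⟩; exact ⟨i, by omega, rfl⟩
  · rintro ⟨i, hi, rfl⟩; exact ⟨i, by omega, rfl⟩

lemma des_append {α β : List ℕ} (hα : α ≠ []) (hβ : β ≠ []) :
    Des (α ++ β) = Des α ∪ insert α.sum ((Des β).image (α.sum + ·)) := by
  have ha : 0 < α.length := List.length_pos_iff.2 hα
  have hb : 0 < β.length := List.length_pos_iff.2 hβ
  have key : ∀ n : ℕ, ((α ++ β).take n).sum = (α.take n).sum + (β.take (n - α.length)).sum := by
    intro n
    rw [List.take_append, List.sum_append]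
  ext x
  simp only [Finset.mem_union, Finset.mem_insert, Finset.mem_image, mem_Des]
  constructor
  · rintro ⟨i, hi, rfl⟩
    rw [List.length_append] at hi
    rw [key]
    rcases lt_trichotomy (i + 1) α.length with h | h | h
    · left
      exact ⟨i, h, by rw [show i + 1 - α.length = 0 from by omega]; simp⟩
    · right; left
      rw [show i + 1 - α.length = 0 from by omega]
      rw [h, List.take_length]
      simp
    · right; right
      refine ⟨(β.take (i + 1 - α.length)).sum, ⟨i - α.length, by omega, ?_⟩, ?_⟩
      · rw [show i - α.length + 1 = i + 1 - α.length from by omega]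
      · rw [List.take_of_length_le (show α.length ≤ i + 1 from by omega)]
  · rintro (⟨i, hi, rfl⟩ | rfl | ⟨d, ⟨i, hi, rfl⟩, rfl⟩)
    · refine ⟨i, by rw [List.length_append]; omega, ?_⟩
      rw [key, show i + 1 - α.length = 0 from by omega]
      simp
    · refine ⟨α.length - 1, by rw [List.length_append]; omega, ?_⟩
      rw [key, show α.length - 1 + 1 = α.length from by omega, List.take_length,
        Nat.sub_self]
      simp
    · refine ⟨α.length + i, by rw [List.length_append]; omega, ?_⟩
      rw [key, List.take_of_length_le (show α.length ≤ α.length + i + 1 from by omega),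
        show α.length + i + 1 - α.length = i + 1 from by omega]

lemma pval_zero (A : List (List ℕ)) : pval A 0 = 0 := by simp [pval]

lemma pval_cons (α : List ℕ) (A : List (List ℕ)) (j : ℕ) :
    pval (α :: A) (j + 1) = α.sum + pval A j := by
  simp [pval, List.take_cons, List.sum_append]

lemma Dset_cons (α : List ℕ) (A : List (List ℕ)) :
    Dset (α :: A) = Des α ∪ (Dset A).image (α.sum + ·) := by
  ext x
  simp only [Dset, Finset.mem_biUnion, Finset.mem_range, Finset.mem_image,
    Finset.mem_union]
  constructor
  · rintro ⟨j, hj, d, hd, rfl⟩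
    cases j with
    | zero => left; simpa using hd
    | succ j =>
      right
      refine ⟨pval A j + d, ⟨j, by simpa using hj, d, by simpa using hd, rfl⟩, ?_⟩
      have := pval_cons α A j
      simp only [pval] at this ⊢
      omega
  · rintro (hx | ⟨y, ⟨j, hj, d, hd, rfl⟩, rfl⟩)
    · exact ⟨0, by simp, x, by simpa using hx, by simp⟩
    · refine ⟨j + 1, by simpa using Nat.succ_lt_succ hj, d, by simpa using hd, ?_⟩
      have := pval_cons α A j
      simp only [pval] at this ⊢
      omega

lemma Pset_cons (α : List ℕ) (A : List (List ℕ)) (hA : A ≠ []) :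
    Pset (α :: A) = insert α.sum ((Pset A).image (α.sum + ·)) := by
  have hl : 0 < A.length := List.length_pos_iff.2 hA
  ext x
  simp only [Pset, Finset.mem_image, Finset.mem_insert, Finset.mem_Icc,
    List.length_cons]
  constructor
  · rintro ⟨j, hj, rfl⟩
    obtain ⟨k, rfl⟩ : ∃ k, j = k + 1 := ⟨j - 1, by omega⟩
    rw [pval_cons]
    cases Nat.eq_zero_or_pos k with
    | inl h => left; simp [h, pval_zero]
    | inr h => right; exact ⟨pval A k, ⟨k, by omega, rfl⟩, rfl⟩
  · rintro (rfl | ⟨y, ⟨k, hk, rfl⟩, rfl⟩)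
    · exact ⟨1, by omega, by simp [pval_cons, pval_zero]⟩
    · exact ⟨k + 1, by omega, by rw [pval_cons]⟩

lemma flatten_ne_nil {A : List (List ℕ)} (hA : A ≠ [])
    (hcomp : ∀ α ∈ A, α ≠ []) : A.flatten ≠ [] := by
  cases A with
  | nil => exact absurd rfl hA
  | cons α A =>
    simp only [List.flatten_cons, ne_eq, List.append_eq_nil_iff]
    intro ⟨h1, _⟩
    exact hcomp α (by simp) h1

lemma des_flatten (A : List (List ℕ)) (hcomp : ∀ α ∈ A, α ≠ []) :
    Des A.flatten = Dset A ∪ Pset A := by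
  induction A with
  | nil => simp [Des, Dset, Pset]
  | cons α A ih =>
    have hα : α ≠ [] := hcomp α (by simp)
    rcases eq_or_ne A [] with rfl | hA
    · simp only [List.flatten_cons, List.flatten_nil, List.append_nil]
      have h1 : Dset [α] = Des α := by
        ext x
        simp [Dset, Des]
      have h2 : Pset [α] = ∅ := by
        simp [Pset]
      rw [h1, h2, Finset.union_empty]
    · have hfl : A.flatten ≠ [] := flatten_ne_nil hA (fun β hβ => hcomp β (by simp [hβ]))
      rw [List.flatten_cons, des_append hα hfl, ih (fun β hβ => hcomp β (by simp [hβ])),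
        Dset_cons, Pset_cons α A hA, Finset.image_union,
        ← Finset.union_insert, ← Finset.union_assoc]

lemma pos_sum_of_pos {l : List ℕ} (hl : l ≠ []) (h : ∀ a ∈ l, 0 < a) : 0 < l.sum := by
  cases l with
  | nil => exact absurd rfl hl
  | cons a l => simp only [List.sum_cons]; have := h a (by simp); omega

lemma des_lt_sum {α : List ℕ} (hpos : ∀ a ∈ α, 0 < a) {d : ℕ} (hd : d ∈ Des α) :
    0 < d ∧ d < α.sum := by
  rw [mem_Des] at hd
  obtain ⟨i, hi, rfl⟩ := hd
  constructor
  · apply pos_sum_of_pos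
    · intro h
      have := congrArg List.length h
      simp only [List.length_take, List.length_nil] at this
      omega
    · intro a ha
      exact hpos a (List.mem_of_mem_take ha)
  · conv_rhs => rw [← List.take_append_drop (i + 1) α]
    rw [List.sum_append]
    have : 0 < (α.drop (i + 1)).sum := by
      apply pos_sum_of_pos
      · intro h
        have := congrArg List.length h
        simp only [List.length_drop, List.length_nil] at this
        omega
      · intro a ha
        exact hpos a (List.mem_of_mem_drop ha)
    omega

lemma pval_succ_of_lt {A : List (List ℕ)} {j : ℕ} (hj : j < A.length) :
    pval A (j + 1) = pval A j + (A.getD j []).sum := by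
  simp only [pval, List.sum_flatten]
  rw [List.map_take, List.map_take,
    List.sum_take_succ _ j (by simpa using hj)]
  simp [List.getD_eq_getElem?_getD, List.getElem?_eq_getElem hj]

lemma pval_mono (A : List (List ℕ)) : Monotone (pval A) := by
  apply monotone_nat_of_le_succ
  intro j
  rcases lt_or_ge j A.length with h | h
  · rw [pval_succ_of_lt h]; omega
  · simp only [pval]
    rw [List.take_of_length_le h, List.take_of_length_le (by omega)]

lemma disjoint_Dset_Pset (A : List (List ℕ))
    (hcomp : ∀ α ∈ A, α ≠ [] ∧ ∀ a ∈ α, 0 < a) : Disjoint (Dset A) (Pset A) := by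
  rw [Finset.disjoint_left]
  intro x hx hp
  simp only [Dset, Finset.mem_biUnion, Finset.mem_range, Finset.mem_image] at hx
  obtain ⟨j, hj, d, hd, rfl⟩ := hx
  simp only [Pset, Finset.mem_image, Finset.mem_Icc] at hp
  obtain ⟨k, hk, hkx⟩ := hp
  have hmem : A.getD j [] ∈ A := by
    rw [List.getD_eq_getElem?_getD, List.getElem?_eq_getElem hj]
    simp only [Option.getD_some]
    exact List.getElem_mem _
  obtain ⟨hne, hpos⟩ := hcomp _ hmem
  have hdlt := des_lt_sum hpos hd
  have hpj : ((A.take j).flatten).sum = pval A j := rfl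
  have h1 : pval A j < pval A j + d := by omega
  have h2 : pval A j + d < pval A (j + 1) := by
    rw [pval_succ_of_lt hj]; omega
  rcases le_or_gt k j with h | h
  · have := pval_mono A h
    omega
  · have := pval_mono A (show j + 1 ≤ k by omega)
    omega

section Alg

open Finset

noncomputable section

def Fw (A : List (List ℕ)) (w : Equiv.Perm (Fin A.flatten.sum)) : Finset ℕ :=
  (Finset.Icc 1 (A.length - 1)).filter (fun j => pval A j ∉ permDes w)

def sgn (I : Finset ℕ) (j : ℕ) : ℚ := (-1) ^ ((I.filter (fun t => t < j)).card)

lemma sgn_mul_self (I : Finset ℕ) (j : ℕ) : sgn I j * sgn I j = 1 := by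
  rw [sgn, ← pow_add]
  exact Even.neg_one_pow ⟨_, rfl⟩

lemma sgn_insert {I : Finset ℕ} {j : ℕ} (hj : j ∉ I) (k : ℕ) :
    sgn (insert j I) k = (if j < k then -1 else 1) * sgn I k := by
  rw [sgn, sgn, Finset.filter_insert]
  split
  · rw [Finset.card_insert_of_notMem (fun h => hj (Finset.mem_filter.1 h).1), pow_succ]
    ring
  · rw [one_mul]

lemma sgn_erase_self (I : Finset ℕ) (m : ℕ) : sgn (I.erase m) m = sgn I m := by
  unfold sgn
  congr 2
  ext t
  simp only [Finset.mem_filter, Finset.mem_erase]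
  constructor
  · rintro ⟨⟨_, h⟩, h2⟩; exact ⟨h, h2⟩
  · rintro ⟨h, h2⟩; exact ⟨⟨by omega, h⟩, h2⟩

lemma sign_anti {I : Finset ℕ} {j k : ℕ} (hj : j ∉ I) (hk : k ∉ I) (hjk : j ≠ k) :
    sgn I j * sgn (insert j I) k = -(sgn I k * sgn (insert k I) j) := by
  rw [sgn_insert hj, sgn_insert hk]
  rcases lt_or_gt_of_ne hjk with h | h
  · rw [if_pos h, if_neg (by omega)]; ring
  · rw [if_neg (by omega), if_pos h]; ring

lemma dBasis_eq (A : List (List ℕ)) (q : Finset ℕ × Equiv.Perm (Fin A.flatten.sum)) :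
    dBasis A q = ∑ j ∈ Fw A q.2 \ q.1, sgn q.1 j • Finsupp.single (insert j q.1, q.2) 1 := by
  unfold dBasis sgn Fw
  congr 1
  ext t
  simp only [Finset.mem_filter, Finset.mem_sdiff]
  tauto

lemma dmap_single (A : List (List ℕ)) (q) (c : ℚ) :
    dmap A (Finsupp.single q c) = c • dBasis A q := by
  rw [dmap, Finsupp.lsum_single, LinearMap.toSpanSingleton_apply]

lemma dmap_single_one (A : List (List ℕ)) (q) :
    dmap A (Finsupp.single q 1) = dBasis A q := by
  rw [dmap_single, one_smul]

lemma dmap_dBasis (A : List (List ℕ)) (q) : dmap A (dBasis A q) = 0 := by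
  obtain ⟨I, w⟩ := q
  rw [dBasis_eq, map_sum]
  simp only [map_smul, dmap_single_one]
  have hstep : ∀ j ∈ Fw A w \ I,
      sgn I j • dBasis A (insert j I, w)
        = ∑ k ∈ Fw A w \ I,
            (if k ≠ j then
              (sgn I j * sgn (insert j I) k) • Finsupp.single (insert k (insert j I), w) (1:ℚ)
             else 0) := by
    intro j hj
    rw [dBasis_eq]
    rw [show Fw A ((insert j I, w) : Finset ℕ × Equiv.Perm (Fin A.flatten.sum)).2
          \ (insert j I, w).1 = (Fw A w \ I).filter (fun k => k ≠ j) by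
      ext t
      simp only [Finset.mem_sdiff, Finset.mem_filter, Finset.mem_insert]
      tauto]
    rw [Finset.sum_filter, Finset.smul_sum]
    refine Finset.sum_congr rfl (fun k _ => ?_)
    split
    · rw [smul_smul]
    · rw [smul_zero]
  rw [Finset.sum_congr rfl hstep, ← Finset.sum_product']
  refine Finset.sum_involution (fun p _ => Prod.swap p) ?_ ?_ ?_ ?_
  · rintro ⟨j, k⟩ hp
    rw [Finset.mem_product] at hp
    simp only [Finset.mem_sdiff] at hp
    dsimp only [Prod.swap_prod_mk]
    by_cases hjk : k = j
    · subst hjk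
      simp
    · rw [if_pos hjk, if_pos (Ne.symm hjk)]
      rw [Finset.insert_comm]
      rw [← add_smul, sign_anti hp.1.2 hp.2.2 (Ne.symm hjk)]
      simp
  · rintro ⟨j, k⟩ _ hne
    intro hswap
    apply hne
    have h1 : k = j := congrArg Prod.fst hswap
    dsimp only
    rw [if_neg (by simp [h1])]
  · rintro ⟨j, k⟩ hp
    rw [Finset.mem_product] at hp ⊢
    exact ⟨hp.2, hp.1⟩
  · rintro ⟨j, k⟩ _
    rfl

lemma dd_zero (A : List (List ℕ)) : (dmap A).comp (dmap A) = 0 := by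
  apply Finsupp.lhom_ext
  intro q c
  rw [LinearMap.comp_apply, dmap_single, map_smul, dmap_dBasis]
  simp

def hBasis (A : List (List ℕ)) (q : Finset ℕ × Equiv.Perm (Fin A.flatten.sum)) : VS A :=
  if hne : (Fw A q.2).Nonempty then
    if (Fw A q.2).min' hne ∈ q.1 then
      sgn q.1 ((Fw A q.2).min' hne) •
        Finsupp.single (q.1.erase ((Fw A q.2).min' hne), q.2) 1
    else 0
  else 0

def hmap (A : List (List ℕ)) : VS A →ₗ[ℚ] VS A :=
  Finsupp.lsum ℚ (fun q => LinearMap.toSpanSingleton ℚ (VS A) (hBasis A q))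

lemma hmap_single_one (A : List (List ℕ)) (q) :
    hmap A (Finsupp.single q 1) = hBasis A q := by
  rw [hmap, Finsupp.lsum_single, LinearMap.toSpanSingleton_apply, one_smul]

lemma homotopy (A : List (List ℕ)) (q) (hne : (Fw A q.2).Nonempty) :
    dmap A (hBasis A q) + hmap A (dBasis A q) = Finsupp.single q 1 := by
  obtain ⟨I, w⟩ := q
  set F := Fw A w with hF
  set m := F.min' hne with hm
  have hmF : m ∈ F := F.min'_mem hne
  have hmin : ∀ j ∈ F, m ≤ j := fun j hj => F.min'_le j hj
  have hhd : hmap A (dBasis A (I, w))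
      = ∑ j ∈ F \ I, sgn I j • hBasis A (insert j I, w) := by
    rw [dBasis_eq, map_sum]
    simp only [map_smul, hmap_single_one]
    rfl
  by_cases hmI : m ∈ I
  · -- case m ∈ I
    have hB : hBasis A (I, w) = sgn I m • Finsupp.single (I.erase m, w) 1 := by
      rw [hBasis, dif_pos hne, if_pos hmI]
    have hdh : dmap A (hBasis A (I, w))
        = Finsupp.single (I, w) 1
          + ∑ j ∈ F \ I, (sgn I m * sgn (I.erase m) j) •
              Finsupp.single (insert j (I.erase m), w) 1 := by
      rw [hB, map_smul, dmap_single_one, dBasis_eq]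
      rw [show Fw A ((I.erase m, w) : Finset ℕ × Equiv.Perm (Fin A.flatten.sum)).2
            \ (I.erase m, w).1 = insert m (F \ I) by
        ext t
        simp only [Finset.mem_sdiff, Finset.mem_insert, Finset.mem_erase, ← hF]
        constructor
        · rintro ⟨ht, h2⟩
          by_cases htm : t = m
          · exact Or.inl htm
          · exact Or.inr ⟨ht, fun hI => h2 ⟨htm, hI⟩⟩
        · rintro (rfl | ⟨ht, h2⟩)
          · exact ⟨hmF, fun h => h.1 rfl⟩
          · exact ⟨ht, fun h => h2 h.2⟩]
      rw [Finset.sum_insert (by simp [hmI])]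
      rw [smul_add, Finset.smul_sum]
      congr 1
      · rw [Finset.insert_erase hmI, smul_smul, sgn_erase_self, sgn_mul_self, one_smul]
      · refine Finset.sum_congr rfl (fun j hj => ?_)
        rw [smul_smul]
    rw [hdh, hhd, add_assoc, ← Finset.sum_add_distrib]
    rw [Finset.sum_eq_zero, add_zero]
    intro j hj
    rw [Finset.mem_sdiff] at hj
    obtain ⟨hjF, hjI⟩ := hj
    have hjm : j ≠ m := fun h => hjI (h ▸ hmI)
    have hmj : m < j := lt_of_le_of_ne (hmin j hjF) (Ne.symm hjm)
    have hBj : hBasis A (insert j I, w) = sgn (insert j I) m •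
        Finsupp.single (insert j (I.erase m), w) 1 := by
      rw [hBasis]
      rw [dif_pos (show (Fw A ((insert j I, w) :
        Finset ℕ × Equiv.Perm (Fin A.flatten.sum)).2).Nonempty from hne)]
      rw [if_pos (Finset.mem_insert_of_mem hmI)]
      rw [Finset.erase_insert_of_ne hjm]
    rw [hBj, smul_smul, ← add_smul]
    convert zero_smul ℚ _
    have e1 : sgn (I.erase m) j = (if m < j then -1 else 1)⁻¹ * sgn I j := by
      conv_rhs => rw [show I = insert m (I.erase m) from (Finset.insert_erase hmI).symm]
      rw [sgn_insert (Finset.notMem_erase m I)]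
      rcases lt_or_ge m j with h | h
      · rw [if_pos h]; ring
      · rw [if_neg (by omega)]; ring
    have e2 : sgn (insert j I) m = (if j < m then -1 else 1) * sgn I m := sgn_insert hjI m
    rw [e1, e2, if_pos hmj, if_neg (by omega)]
    ring
  · -- case m ∉ I
    have hB : hBasis A (I, w) = 0 := by
      rw [hBasis, dif_pos hne, if_neg hmI]
    rw [hB, map_zero, zero_add, hhd]
    rw [Finset.sum_eq_single_of_mem m (Finset.mem_sdiff.2 ⟨hmF, hmI⟩)]
    · have hBm : hBasis A (insert m I, w) = sgn (insert m I) m •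
          Finsupp.single (I, w) 1 := by
        rw [hBasis]
        rw [dif_pos (show (Fw A ((insert m I, w) :
          Finset ℕ × Equiv.Perm (Fin A.flatten.sum)).2).Nonempty from hne)]
        rw [if_pos (Finset.mem_insert_self m I)]
        rw [Finset.erase_insert hmI]
      rw [hBm, smul_smul]
      have : sgn (insert m I) m = sgn I m := by
        rw [sgn_insert hmI, if_neg (by omega), one_mul]
      rw [this, sgn_mul_self, one_smul]
    · intro j hj hjm
      rw [Finset.mem_sdiff] at hj
      have : hBasis A (insert j I, w) = 0 := by
        rw [hBasis]
        rw [dif_pos (show (Fw A ((insert j I, w) :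
          Finset ℕ × Equiv.Perm (Fin A.flatten.sum)).2).Nonempty from hne)]
        rw [if_neg (by
          simp only [Finset.mem_insert, ← hF, ← hm]
          rintro (h | h)
          · exact hjm h.symm
          · exact hmI h)]
      rw [this, smul_zero]

end

end Alg

section Supp

open Finset

noncomputable section

def Sset (A : List (List ℕ)) (i : ℕ) : Set (Finset ℕ × Equiv.Perm (Fin A.flatten.sum)) :=
  {q | q.1 ⊆ Finset.Icc 1 (A.length - 1) ∧ q.1.card = i
      ∧ permDes q.2 \ Pset A = Dset A ∧ ∀ j ∈ q.1, pval A j ∉ permDes q.2}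

lemma Cgrade_eq (A : List (List ℕ)) (i : ℕ) :
    Cgrade A i = Finsupp.supported ℚ ℚ (Sset A i) := rfl

lemma apply_mem_of_supported {A : List (List ℕ)}
    {s : Set (Finset ℕ × Equiv.Perm (Fin A.flatten.sum))} (f : VS A →ₗ[ℚ] VS A)
    {M : Submodule ℚ (VS A)}
    (hf : ∀ q ∈ s, f (Finsupp.single q 1) ∈ M) {x : VS A}
    (hx : x ∈ Finsupp.supported ℚ ℚ s) : f x ∈ M := by
  rw [Finsupp.mem_supported] at hx
  have hxx : x = ∑ q ∈ x.support, Finsupp.single q (x q) := by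
    conv_lhs => rw [← Finsupp.sum_single x]
    rfl
  rw [hxx, map_sum]
  refine Submodule.sum_mem _ (fun q hq => ?_)
  have h1 : Finsupp.single q (x q) = x q • Finsupp.single q (1 : ℚ) := by
    rw [Finsupp.smul_single, smul_eq_mul, mul_one]
  rw [h1, map_smul]
  exact Submodule.smul_mem _ _ (hf q (hx hq))

lemma apply_eq_self_of_supported {A : List (List ℕ)}
    {s : Set (Finset ℕ × Equiv.Perm (Fin A.flatten.sum))} (f : VS A →ₗ[ℚ] VS A)
    (hf : ∀ q ∈ s, f (Finsupp.single q 1) = Finsupp.single q 1) {x : VS A}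
    (hx : x ∈ Finsupp.supported ℚ ℚ s) : f x = x := by
  have h0 : (f - (LinearMap.id : VS A →ₗ[ℚ] VS A)) x ∈ (⊥ : Submodule ℚ (VS A)) :=
    apply_mem_of_supported (f - (LinearMap.id : VS A →ₗ[ℚ] VS A))
      (fun q hq => by simp [LinearMap.sub_apply, hf q hq]) hx
  rw [Submodule.mem_bot, LinearMap.sub_apply, LinearMap.id_apply, sub_eq_zero] at h0
  exact h0

lemma dBasis_mem_grade {A : List (List ℕ)} {i : ℕ} {q} (hq : q ∈ Sset A i) :
    dBasis A q ∈ Cgrade A (i + 1) := by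
  obtain ⟨I, w⟩ := q
  obtain ⟨h1, h2, h3, h4⟩ := hq
  rw [Cgrade_eq, dBasis_eq]
  refine Submodule.sum_mem _ (fun j hj => Submodule.smul_mem _ _ ?_)
  rw [Finset.mem_sdiff] at hj
  obtain ⟨hjF, hjI⟩ := hj
  rw [Fw, Finset.mem_filter] at hjF
  apply Finsupp.single_mem_supported
  refine ⟨Finset.insert_subset hjF.1 h1, ?_, h3, ?_⟩
  · rw [Finset.card_insert_of_notMem hjI, h2]
  · intro t ht
    rcases Finset.mem_insert.1 ht with rfl | ht
    · exact hjF.2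
    · exact h4 t ht

lemma hBasis_mem_grade {A : List (List ℕ)} {i : ℕ} {q} (hq : q ∈ Sset A i) :
    hBasis A q ∈ Cgrade A (i - 1) := by
  obtain ⟨I, w⟩ := q
  obtain ⟨h1, h2, h3, h4⟩ := hq
  rw [Cgrade_eq, hBasis]
  split
  · next hne =>
    split
    · next hm =>
      refine Submodule.smul_mem _ _ (Finsupp.single_mem_supported _ _ ?_)
      refine ⟨(Finset.erase_subset _ _).trans h1, ?_, h3,
        fun t ht => h4 t (Finset.mem_of_mem_erase ht)⟩
      rw [Finset.card_erase_of_mem hm, h2]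
    · exact Submodule.zero_mem _
  · exact Submodule.zero_mem _

lemma Fw_nonempty_of_mem {A : List (List ℕ)} {i : ℕ} (hi : 1 ≤ i) {q}
    (hq : q ∈ Sset A i) : (Fw A q.2).Nonempty := by
  obtain ⟨h1, h2, h3, h4⟩ := hq
  obtain ⟨t, ht⟩ := Finset.card_pos.1 (show 0 < q.1.card by omega)
  exact ⟨t, Finset.mem_filter.2 ⟨h1 ht, h4 t ht⟩⟩

lemma dBasis_zero_of_Fw_empty {A : List (List ℕ)} {q} (h : Fw A q.2 = ∅) :
    dBasis A q = 0 := by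
  rw [dBasis_eq, h]
  simp

lemma hBasis_zero_of_empty {A : List (List ℕ)} {q}
    (h : q.1 = (∅ : Finset ℕ)) : hBasis A q = 0 := by
  rw [hBasis]
  split
  · rw [if_neg (by simp [h])]
  · rfl

lemma part_b (A : List (List ℕ)) (i : ℕ) (hi : 1 ≤ i) :
    Cgrade A i ⊓ LinearMap.ker (dmap A) = Submodule.map (dmap A) (Cgrade A (i - 1)) := by
  apply le_antisymm
  · rintro x hx
    rw [Submodule.mem_inf] at hx
    obtain ⟨hx1, hx2⟩ := hx
    rw [LinearMap.mem_ker] at hx2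
    rw [Cgrade_eq] at hx1
    refine ⟨hmap A x, ?_, ?_⟩
    · refine apply_mem_of_supported (hmap A)
        (fun q hq => ?_) hx1
      rw [hmap_single_one]
      exact hBasis_mem_grade hq
    · have hid : ((dmap A).comp (hmap A) + (hmap A).comp (dmap A)) x = x := by
        refine apply_eq_self_of_supported _ (fun q hq => ?_) hx1
        rw [LinearMap.add_apply, LinearMap.comp_apply, LinearMap.comp_apply,
          hmap_single_one, dmap_single_one]
        exact homotopy A q (Fw_nonempty_of_mem hi hq)
      rw [LinearMap.add_apply, LinearMap.comp_apply, LinearMap.comp_apply, hx2, map_zero,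
        add_zero] at hid
      exact hid
  · rintro _ ⟨z, hz, rfl⟩
    rw [Cgrade_eq] at hz
    rw [Submodule.mem_inf]
    constructor
    · refine apply_mem_of_supported (dmap A) (fun q hq => ?_) hz
      rw [dmap_single_one]
      have := dBasis_mem_grade hq
      rwa [show i - 1 + 1 = i from by omega] at this
    · rw [LinearMap.mem_ker, ← LinearMap.comp_apply, dd_zero]
      rfl

lemma pval_mem_Pset {A : List (List ℕ)} {j : ℕ} (hj : j ∈ Finset.Icc 1 (A.length - 1)) :
    pval A j ∈ Pset A := Finset.mem_image_of_mem _ hj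

lemma part_c (A : List (List ℕ)) (hA : A ≠ [])
    (hcomp : ∀ α ∈ A, α ≠ [] ∧ ∀ a ∈ α, 0 < a) :
    Cgrade A 0 ⊓ LinearMap.ker (dmap A)
      = Finsupp.supported ℚ ℚ
          {q | q.1 = (∅ : Finset ℕ) ∧ permDes q.2 = Dset A ∪ Pset A} := by
  classical
  have hdisj := disjoint_Dset_Pset A hcomp
  apply le_antisymm
  · rintro x hx
    rw [Submodule.mem_inf] at hx
    obtain ⟨hx1, hx2⟩ := hx
    rw [LinearMap.mem_ker] at hx2
    rw [Cgrade_eq, Finsupp.mem_supported] at hx1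
    rw [Finsupp.mem_supported]
    set x₁ : VS A := ∑ q ∈ x.support.filter (fun q => (Fw A q.2).Nonempty),
      Finsupp.single q (x q) with hx₁
    set x₂ : VS A := ∑ q ∈ x.support.filter (fun q => ¬ (Fw A q.2).Nonempty),
      Finsupp.single q (x q) with hx₂
    have hsplit : x = x₁ + x₂ := by
      rw [hx₁, hx₂, Finset.sum_filter_add_sum_filter_not]
      conv_lhs => rw [← Finsupp.sum_single x]
      rfl
    have hdx2 : dmap A x₂ = 0 := by
      rw [hx₂, map_sum]
      refine Finset.sum_eq_zero (fun q hq => ?_)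
      rw [Finset.mem_filter] at hq
      have h1 : Finsupp.single q (x q) = x q • Finsupp.single q (1 : ℚ) := by
        rw [Finsupp.smul_single, smul_eq_mul, mul_one]
      rw [h1, map_smul, dmap_single_one,
        dBasis_zero_of_Fw_empty (Finset.not_nonempty_iff_eq_empty.1 hq.2), smul_zero]
    have hx1supp : x₁ ∈ Finsupp.supported ℚ ℚ
        {q | q ∈ Sset A 0 ∧ (Fw A q.2).Nonempty} := by
      rw [hx₁]
      refine Submodule.sum_mem _ (fun q hq => ?_)
      rw [Finset.mem_filter] at hq
      exact Finsupp.single_mem_supported _ _ ⟨hx1 hq.1, hq.2⟩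
    have hhx1 : hmap A x₁ = 0 := by
      have := apply_mem_of_supported (M := (⊥ : Submodule ℚ (VS A))) (hmap A)
        (fun q hq => by
          rw [hmap_single_one, hBasis_zero_of_empty (Finset.card_eq_zero.1 hq.1.2.1)]
          exact Submodule.zero_mem _) hx1supp
      simpa using this
    have hdx1 : dmap A x₁ = 0 := by
      have h := congrArg (dmap A) hsplit
      rw [map_add, hx2, hdx2, add_zero] at h
      exact h.symm
    have hx10 : x₁ = 0 := by
      have hid : ((dmap A).comp (hmap A) + (hmap A).comp (dmap A)) x₁ = x₁ := by
        refine apply_eq_self_of_supported _ (fun q hq => ?_) hx1supp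
        rw [LinearMap.add_apply, LinearMap.comp_apply, LinearMap.comp_apply,
          hmap_single_one, dmap_single_one]
        exact homotopy A q hq.2
      rw [LinearMap.add_apply, LinearMap.comp_apply, LinearMap.comp_apply,
        hhx1, hdx1, map_zero, map_zero, add_zero] at hid
      exact hid.symm
    intro q hq
    have hq2 : q ∈ x₂.support := by
      rw [hsplit, hx10, zero_add] at hq
      exact hq
    have hqt : q ∈ x.support.filter (fun q => ¬ (Fw A q.2).Nonempty) := by
      rw [hx₂] at hq2
      obtain ⟨c, hc, hac⟩ := Finsupp.mem_support_finset_sum _ hq2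
      have : q = c := Finset.mem_singleton.1 (Finsupp.support_single_subset hac)
      rwa [this]
    rw [Finset.mem_filter] at hqt
    obtain ⟨hqx, hqF⟩ := hqt
    obtain ⟨h1, h2, h3, h4⟩ := hx1 hqx
    have hFe : Fw A q.2 = ∅ := Finset.not_nonempty_iff_eq_empty.1 hqF
    have hP : Pset A ⊆ permDes q.2 := by
      intro p hp
      simp only [Pset, Finset.mem_image] at hp
      obtain ⟨k, hk, rfl⟩ := hp
      by_contra hcon
      have : k ∈ Fw A q.2 := Finset.mem_filter.2 ⟨hk, hcon⟩
      rw [hFe] at this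
      exact absurd this (Finset.notMem_empty k)
    refine ⟨Finset.card_eq_zero.1 h2, ?_⟩
    rw [← h3, Finset.sdiff_union_of_subset hP]
  · rintro x hx
    rw [Finsupp.mem_supported] at hx
    have hFempty : ∀ q ∈ x.support, Fw A (Prod.snd q) = ∅ := by
      intro q hq
      obtain ⟨h1, h2⟩ := hx hq
      rw [Fw, Finset.filter_eq_empty_iff]
      intro j hj
      rw [not_not, h2]
      exact Finset.mem_union_right _ (pval_mem_Pset hj)
    rw [Submodule.mem_inf]
    constructor
    · rw [Cgrade_eq, Finsupp.mem_supported]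
      intro q hq
      obtain ⟨h1, h2⟩ := hx hq
      refine ⟨by simp [h1], by simp [h1], ?_, by simp [h1]⟩
      rw [h2, Finset.union_sdiff_right, Finset.sdiff_eq_self_of_disjoint hdisj]
    · rw [LinearMap.mem_ker]
      have := apply_mem_of_supported (M := (⊥ : Submodule ℚ (VS A))) (dmap A)
        (fun q hq => by
          rw [dmap_single_one, dBasis_zero_of_Fw_empty ?_]
          · exact Submodule.zero_mem _
          · obtain ⟨h1, h2⟩ := hq
            rw [Fw, Finset.filter_eq_empty_iff]
            intro j hj
            rw [not_not, h2]
            exact Finset.mem_union_right _ (pval_mem_Pset hj)) hx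
      simpa using this

lemma part_d (A : List (List ℕ)) (hA : A ≠ [])
    (hcomp : ∀ α ∈ A, α ≠ [] ∧ ∀ a ∈ α, 0 < a) :
    Module.finrank ℚ ↥(Finsupp.supported ℚ ℚ
        {q : Finset ℕ × Equiv.Perm (Fin A.flatten.sum) |
          q.1 = (∅ : Finset ℕ) ∧ permDes q.2 = Dset A ∪ Pset A})
      = fNum A.flatten.sum (Des A.flatten) := by
  classical
  set s : Set (Finset ℕ × Equiv.Perm (Fin A.flatten.sum)) :=
    {q | q.1 = (∅ : Finset ℕ) ∧ permDes q.2 = Dset A ∪ Pset A} with hs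
  have e2 : s ≃ {w : Equiv.Perm (Fin A.flatten.sum) // permDes w = Dset A ∪ Pset A} :=
    { toFun := fun q => ⟨q.1.2, q.2.2⟩
      invFun := fun w => ⟨((∅ : Finset ℕ), w.1), ⟨rfl, w.2⟩⟩
      left_inv := fun q => Subtype.ext (Prod.ext q.2.1.symm rfl)
      right_inv := fun w => rfl }
  have lin : (Finsupp.supported ℚ ℚ s) ≃ₗ[ℚ]
      ({w : Equiv.Perm (Fin A.flatten.sum) // permDes w = Dset A ∪ Pset A} →₀ ℚ) :=
    (Finsupp.supportedEquivFinsupp s).trans (Finsupp.domLCongr e2)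
  rw [lin.finrank_eq, Module.finrank_finsupp_self, Fintype.card_subtype, fNum,
    des_flatten A (fun α hα => (hcomp α hα).1)]

end

end Supp

/-- for compositions `α⁽¹⁾,…,α⁽ℓ⁾` (ℓ ≥ 1) of positive sizes:
(a) `d ∘ d = 0`; (b) for every `i ≥ 1`, `ker(d : Cⁱ → Cⁱ⁺¹) = im(d : Cⁱ⁻¹ → Cⁱ)`;
(c) `ker(d : C⁰ → C¹)` is the span of the basis vectors `(∅, w)` with
`Des(w) = D ∪ P`, so its dimension is `f^{α⁽¹⁾·α⁽²⁾·⋯·α⁽ℓ⁾}`. -/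
theorem ribbon_complex_acyclic (A : List (List ℕ)) (hA : A ≠ [])
    (hcomp : ∀ α ∈ A, α ≠ [] ∧ ∀ a ∈ α, 0 < a) :
    (dmap A).comp (dmap A) = 0
    ∧ (∀ i : ℕ, 1 ≤ i →
        Cgrade A i ⊓ LinearMap.ker (dmap A) = Submodule.map (dmap A) (Cgrade A (i - 1)))
    ∧ Cgrade A 0 ⊓ LinearMap.ker (dmap A)
        = Finsupp.supported ℚ ℚ
            {q | q.1 = (∅ : Finset ℕ) ∧ permDes q.2 = Dset A ∪ Pset A}
    ∧ Module.finrank ℚ ↥(Cgrade A 0 ⊓ LinearMap.ker (dmap A))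
        = fNum A.flatten.sum (Des A.flatten) := by
  refine ⟨dd_zero A, fun i hi => part_b A i hi, part_c A hA hcomp, ?_⟩
  rw [part_c A hA hcomp]
  exact part_d A hA hcomp
end Lemmas
end
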